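/- arXiv:1306.0862 — 4 statements merged into one kernel-verified Lean document; each statement's English description precedes it below -/
import Mathlib

section
/- Let μ be a probability measure on 2^X satisfying the FKG condition, and let C_1, …, C_n ⊆ X be arbitrary subsets. For a nonempty block B ⊆ {1,…,n} write U(B) = μ({A ⊆ X : ⋃_{i∈B} C_i ⊆ A}). Then Σ_σ (−1)^{ℓ(σ)+1} (∏_{B∈σ} (|B|−1)!) · (∏_{B∈σ} U(B)) ≥ 0, where the sum runs over all set partitions σ of {1,…,n} and ℓ(σ) denotes the number of blocks of σ. (This is the inequality E_{n,μ}(f_1,…,f_n) ≥ 0 for unimodal monotone nondecreasing Boolean functions f_i, since ⟨∏_{i∈B} f_i⟩_μ = U(B) when f_i is the indicator of {A : C_i ⊆ A}.) -/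
open Finset
open scoped Classical

noncomputable section

/-- Total mass the measure `μ` assigns to a family `𝒜` of subsets of `X = Fin m`. -/
def famMeas {m : ℕ} (μ : Finset (Fin m) → ℝ) (𝒜 : Finset (Finset (Fin m))) : ℝ :=
  ∑ A ∈ 𝒜, μ A

/-- `μ` is a probability measure on `2^X`. -/
def IsProbMeasure {m : ℕ} (μ : Finset (Fin m) → ℝ) : Prop :=
  (∀ A, 0 ≤ μ A) ∧ ∑ A : Finset (Fin m), μ A = 1

/-- The FKG lattice condition on `μ`. -/
def FKGCondition {m : ℕ} (μ : Finset (Fin m) → ℝ) : Prop :=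
  ∀ A B : Finset (Fin m), μ A * μ B ≤ μ (A ∩ B) * μ (A ∪ B)

/-- The principal upper set `{A ⊆ X : C ⊆ A}`. -/
def upSet {m : ℕ} (C : Finset (Fin m)) : Finset (Finset (Fin m)) :=
  Finset.univ.filter (fun S => C ⊆ S)

/-- `P` is a set partition of `{1,…,n}` (modeled as `Fin n`): the blocks are
nonempty and each element lies in exactly one block. -/
def IsSetPartition {n : ℕ} (P : Finset (Finset (Fin n))) : Prop :=
  ∅ ∉ P ∧ ∀ i : Fin n, ∃! B, B ∈ P ∧ i ∈ B

/-- The finite set of all set partitions of `Fin n`. -/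
def setPartitions (n : ℕ) : Finset (Finset (Finset (Fin n))) :=
  Finset.univ.filter IsSetPartition

namespace CIB

variable {ι : Type*} [DecidableEq ι]

/-- set partitions of a finite set `T`. -/
def parts (T : Finset ι) : Finset (Finset (Finset ι)) :=
  T.powerset.powerset.filter (fun P => ∅ ∉ P ∧ ∀ i ∈ T, ∃! B, B ∈ P ∧ i ∈ B)

lemma mem_parts {T : Finset ι} {P : Finset (Finset ι)} :
    P ∈ parts T ↔ (∀ B ∈ P, B ⊆ T) ∧ ∅ ∉ P ∧ ∀ i ∈ T, ∃! B, B ∈ P ∧ i ∈ B := by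
  simp only [parts, Finset.mem_filter, Finset.mem_powerset]
  constructor
  · rintro ⟨hsub, h2, h3⟩
    exact ⟨fun B hB => Finset.mem_powerset.1 (hsub hB), h2, h3⟩
  · rintro ⟨h1, h2, h3⟩
    exact ⟨fun B hB => Finset.mem_powerset.2 (h1 B hB), h2, h3⟩

lemma parts_empty : parts (∅ : Finset ι) = {∅} := by
  ext P
  simp only [mem_parts, Finset.mem_singleton]
  constructor
  · rintro ⟨h1, h2, _⟩
    ext B; simp only [Finset.notMem_empty, iff_false]
    intro hB
    exact h2 (by simpa [Finset.subset_empty.1 (h1 B hB)] using hB)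
  · rintro rfl; simp

lemma block_nonempty {T : Finset ι} {P : Finset (Finset ι)} (hP : P ∈ parts T)
    {B : Finset ι} (hB : B ∈ P) : B.Nonempty := by
  rcases Finset.eq_empty_or_nonempty B with rfl | h
  · exact absurd hB (mem_parts.1 hP).2.1
  · exact h

lemma block_disjoint {T : Finset ι} {P : Finset (Finset ι)} (hP : P ∈ parts T)
    {B B' : Finset ι} (hB : B ∈ P) (hB' : B' ∈ P) (hne : B ≠ B') : Disjoint B B' := by
  rw [Finset.disjoint_left]
  intro i hi hi'
  have hiT : i ∈ T := (mem_parts.1 hP).1 B hB hi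
  obtain ⟨C, -, hU⟩ := (mem_parts.1 hP).2.2 i hiT
  exact hne ((hU B ⟨hB, hi⟩).trans (hU B' ⟨hB', hi'⟩).symm)

lemma erase_mem_parts {T : Finset ι} {P : Finset (Finset ι)} (hP : P ∈ parts T)
    {B : Finset ι} (hB : B ∈ P) : P.erase B ∈ parts (T \ B) := by
  obtain ⟨h1, h2, h3⟩ := mem_parts.1 hP
  refine mem_parts.2 ⟨?_, fun h => h2 (Finset.mem_of_mem_erase h), ?_⟩
  · intro C hC
    have hCB : C ≠ B := Finset.ne_of_mem_erase hC
    have := block_disjoint hP (Finset.mem_of_mem_erase hC) hB hCB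
    intro x hx
    exact Finset.mem_sdiff.2 ⟨h1 C (Finset.mem_of_mem_erase hC) hx,
      fun hxB => (Finset.disjoint_left.1 this hx) hxB⟩
  · intro i hi
    obtain ⟨hiT, hiB⟩ := Finset.mem_sdiff.1 hi
    obtain ⟨C, ⟨hC, hiC⟩, hU⟩ := h3 i hiT
    have hCB : C ≠ B := fun h => hiB (h ▸ hiC)
    exact ⟨C, ⟨Finset.mem_erase.2 ⟨hCB, hC⟩, hiC⟩,
      fun D ⟨hD, hiD⟩ => hU D ⟨Finset.mem_of_mem_erase hD, hiD⟩⟩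

lemma insert_mem_parts {U : Finset ι} {P : Finset (Finset ι)} (hP : P ∈ parts U)
    {B : Finset ι} (hBne : B.Nonempty) (hdisj : Disjoint B U) :
    insert B P ∈ parts (B ∪ U) := by
  obtain ⟨h1, h2, h3⟩ := mem_parts.1 hP
  refine mem_parts.2 ⟨?_, ?_, ?_⟩
  · intro C hC
    rcases Finset.mem_insert.1 hC with rfl | hC
    · exact Finset.subset_union_left
    · exact (h1 C hC).trans Finset.subset_union_right
  · intro h
    rcases Finset.mem_insert.1 h with h | h
    · exact hBne.ne_empty h.symm
    · exact h2 h
  · intro i hi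
    rcases Finset.mem_union.1 hi with hiB | hiU
    · refine ⟨B, ⟨Finset.mem_insert_self _ _, hiB⟩, ?_⟩
      rintro D ⟨hD, hiD⟩
      rcases Finset.mem_insert.1 hD with rfl | hD
      · rfl
      · exact absurd (h1 D hD hiD) (fun h => (Finset.disjoint_left.1 hdisj hiB) h)
    · obtain ⟨C, ⟨hC, hiC⟩, hU⟩ := h3 i hiU
      refine ⟨C, ⟨Finset.mem_insert_of_mem hC, hiC⟩, ?_⟩
      rintro D ⟨hD, hiD⟩
      rcases Finset.mem_insert.1 hD with rfl | hD
      · exact absurd hiU (Finset.disjoint_left.1 hdisj hiD)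
      · exact hU D ⟨hD, hiD⟩

lemma not_mem_of_disjoint {U : Finset ι} {P : Finset (Finset ι)} (hP : P ∈ parts U)
    {B : Finset ι} (hBne : B.Nonempty) (hdisj : Disjoint B U) : B ∉ P := by
  intro hB
  obtain ⟨i, hi⟩ := hBne
  exact (Finset.disjoint_left.1 hdisj hi) ((mem_parts.1 hP).1 B hB hi)


lemma biUnion_parts {U : Finset ι} {P : Finset (Finset ι)} (hP : P ∈ parts U) :
    P.biUnion id = U := by
  obtain ⟨h1, _, h3⟩ := mem_parts.1 hP
  ext i
  simp only [Finset.mem_biUnion, id]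
  constructor
  · rintro ⟨B, hB, hiB⟩; exact h1 B hB hiB
  · intro hi; obtain ⟨B, ⟨hB, hiB⟩, -⟩ := h3 i hi; exact ⟨B, hB, hiB⟩

lemma sum_card_parts {U : Finset ι} {P : Finset (Finset ι)} (hP : P ∈ parts U) :
    ∑ B ∈ P, B.card = U.card := by
  conv_rhs => rw [← biUnion_parts hP]
  exact (Finset.card_biUnion (fun B hB B' hB' hne => block_disjoint hP hB hB' hne)).symm

/-- Master reindexing lemma: summing over partitions with a marked block equals
summing over a nonempty block and a partition of the rest. -/
lemma master (T : Finset ι) (u : Finset ι → Finset (Finset ι) → ℝ) :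
    ∑ P ∈ parts T, ∑ B ∈ P, u B (P.erase B)
      = ∑ B ∈ T.powerset.filter Finset.Nonempty, ∑ P' ∈ parts (T \ B), u B P' := by
  rw [Finset.sum_sigma', Finset.sum_sigma']
  refine Finset.sum_nbij' (fun x => ⟨x.2, x.1.erase x.2⟩) (fun y => ⟨insert y.1 y.2, y.1⟩)
    ?_ ?_ ?_ ?_ ?_
  · rintro ⟨P, B⟩ hx
    simp only [Finset.mem_sigma] at hx ⊢
    obtain ⟨hP, hB⟩ := hx
    refine ⟨Finset.mem_filter.2 ⟨Finset.mem_powerset.2 ((mem_parts.1 hP).1 B hB), block_nonempty hP hB⟩, erase_mem_parts hP hB⟩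
  · rintro ⟨B, P'⟩ hy
    simp only [Finset.mem_sigma] at hy ⊢
    obtain ⟨hB, hP'⟩ := hy
    obtain ⟨hBsub, hBne⟩ := Finset.mem_filter.1 hB
    have hBsub' := Finset.mem_powerset.1 hBsub
    have hdisj : Disjoint B (T \ B) := Finset.disjoint_sdiff
    have := insert_mem_parts hP' hBne hdisj
    rw [Finset.union_sdiff_of_subset hBsub'] at this
    exact ⟨this, Finset.mem_insert_self _ _⟩
  · rintro ⟨P, B⟩ hx
    simp only [Finset.mem_sigma] at hx
    obtain ⟨hP, hB⟩ := hx
    simp [Finset.insert_erase hB]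
  · rintro ⟨B, P'⟩ hy
    simp only [Finset.mem_sigma] at hy
    obtain ⟨hB, hP'⟩ := hy
    obtain ⟨hBsub, hBne⟩ := Finset.mem_filter.1 hB
    have hdisj : Disjoint B (T \ B) := Finset.disjoint_sdiff
    have hBnotin : B ∉ P' := not_mem_of_disjoint hP' hBne hdisj
    simp [Finset.erase_insert hBnotin]
  · rintro ⟨P, B⟩ _
    rfl


/-- signed partition generating sum; the target quantity is `-G`. -/
def G (m : Finset ι → ℝ) (T : Finset ι) : ℝ :=
  ∑ P ∈ parts T, (-1 : ℝ) ^ P.card * ∏ B ∈ P, (((B.card - 1).factorial : ℝ) * m B)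

lemma G_empty (m : Finset ι → ℝ) : G m (∅ : Finset ι) = 1 := by
  rw [G, parts_empty]
  simp

lemma sdiff_insert_comm {T B : Finset ι} {t : ι} (ht : t ∈ T) :
    T \ insert t B = (T.erase t) \ B := by
  ext x; simp only [Finset.mem_sdiff, Finset.mem_insert, Finset.mem_erase]; tauto

/-- Identity I1: pulling out the block containing a fixed element `t`. -/
lemma I1 (m : Finset ι → ℝ) {T : Finset ι} {t : ι} (ht : t ∈ T) :
    G m T = -∑ B ∈ (T.erase t).powerset,
      ((B.card.factorial : ℝ) * m (insert t B)) * G m ((T.erase t) \ B) := by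
  classical
  set u : Finset ι → Finset (Finset ι) → ℝ := fun B P' =>
    if t ∈ B then (-1 : ℝ) ^ (P'.card + 1) * (((B.card - 1).factorial : ℝ) * m B) *
      ∏ C ∈ P', (((C.card - 1).factorial : ℝ) * m C) else 0 with hu
  have step1 : G m T = ∑ P ∈ parts T, ∑ B ∈ P, u B (P.erase B) := by
    rw [G]
    refine Finset.sum_congr rfl (fun P hP => ?_)
    obtain ⟨Bt, ⟨hBt, htBt⟩, hUniq⟩ := (mem_parts.1 hP).2.2 t ht
    rw [Finset.sum_eq_single_of_mem Bt hBt]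
    · rw [hu]; simp only [htBt, if_true]
      rw [Finset.card_erase_add_one hBt,
        ← Finset.mul_prod_erase P (fun B => ((B.card - 1).factorial : ℝ) * m B) hBt]
      ring
    · intro C hC hne
      rw [hu]; simp only
      rw [if_neg]
      intro htC
      exact hne (hUniq C ⟨hC, htC⟩)
  rw [step1, master]
  have step2 : ∑ B ∈ T.powerset.filter Finset.Nonempty, ∑ P' ∈ parts (T \ B), u B P'
      = ∑ B ∈ T.powerset, ∑ P' ∈ parts (T \ B), u B P' := by
    refine Finset.sum_filter_of_ne (fun B hB hne => ?_)
    by_contra hBe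
    rw [Finset.not_nonempty_iff_eq_empty] at hBe
    apply hne
    refine Finset.sum_eq_zero (fun P' _ => ?_)
    rw [hu]; simp [hBe]
  have step3 : ∑ B ∈ T.powerset, ∑ P' ∈ parts (T \ B), u B P'
      = ∑ B ∈ (T.powerset.filter (fun B => t ∈ B)), ∑ P' ∈ parts (T \ B), u B P' := by
    refine (Finset.sum_filter_of_ne (fun B hB hne => ?_)).symm
    by_contra htB
    apply hne
    refine Finset.sum_eq_zero (fun P' _ => ?_)
    rw [hu]; simp [htB]
  have step4 : ∑ B ∈ (T.powerset.filter (fun B => t ∈ B)), ∑ P' ∈ parts (T \ B), u B P'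
      = ∑ B0 ∈ (T.erase t).powerset, ∑ P' ∈ parts (T \ insert t B0), u (insert t B0) P' := by
    refine Finset.sum_nbij' (fun B => B.erase t) (fun B0 => insert t B0) ?_ ?_ ?_ ?_ ?_
    · intro B hB
      obtain ⟨hBsub, htB⟩ := Finset.mem_filter.1 hB
      exact Finset.mem_powerset.2 (Finset.erase_subset_erase t (Finset.mem_powerset.1 hBsub))
    · intro B0 hB0
      have h1 := Finset.mem_powerset.1 hB0
      refine Finset.mem_filter.2 ⟨Finset.mem_powerset.2 ?_, Finset.mem_insert_self _ _⟩
      exact Finset.insert_subset ht (h1.trans (Finset.erase_subset _ _))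
    · intro B hB
      exact Finset.insert_erase (Finset.mem_filter.1 hB).2
    · intro B0 hB0
      refine Finset.erase_insert (fun htB0 => ?_)
      exact (Finset.mem_erase.1 ((Finset.mem_powerset.1 hB0) htB0)).1 rfl
    · intro B hB
      rw [Finset.insert_erase (Finset.mem_filter.1 hB).2]
  rw [step2, step3, step4]
  rw [← Finset.sum_neg_distrib]
  refine Finset.sum_congr rfl (fun B0 hB0 => ?_)
  have htB0 : t ∉ B0 := fun h =>
    (Finset.mem_erase.1 ((Finset.mem_powerset.1 hB0) h)).1 rfl
  have hcard : (insert t B0).card = B0.card + 1 := Finset.card_insert_of_notMem htB0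
  have hsd : T \ insert t B0 = (T.erase t) \ B0 := sdiff_insert_comm ht
  rw [hsd, G, Finset.mul_sum, ← Finset.sum_neg_distrib]
  refine Finset.sum_congr rfl (fun P' hP' => ?_)
  rw [hu]; simp only [Finset.mem_insert_self, if_true, hcard]
  simp only [Nat.add_sub_cancel]
  ring

lemma powerset_erase_empty {U : Finset ι} :
    U.powerset.erase ∅ = U.powerset.filter Finset.Nonempty := by
  ext B
  simp [Finset.mem_erase, Finset.nonempty_iff_ne_empty, and_comm]

/-- Identity I2: the marked-block sum. Requires `m ∅ = 1`. -/
lemma I2 (m : Finset ι → ℝ) (hme : m ∅ = 1) (U : Finset ι) :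
    ∑ B ∈ U.powerset, (B.card.factorial : ℝ) * m B * G m (U \ B)
      = (1 - (U.card : ℝ)) * G m U := by
  classical
  have hmem : (∅ : Finset ι) ∈ U.powerset := Finset.empty_mem_powerset U
  rw [← Finset.add_sum_erase _ _ hmem]
  have h0 : ((∅ : Finset ι).card.factorial : ℝ) * m ∅ * G m (U \ ∅) = G m U := by
    simp [hme]
  rw [h0, powerset_erase_empty]
  set u : Finset ι → Finset (Finset ι) → ℝ := fun B P' =>
    (B.card.factorial : ℝ) * m B * ((-1 : ℝ) ^ P'.card *
      ∏ C ∈ P', (((C.card - 1).factorial : ℝ) * m C)) with hu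
  have step1 : ∑ B ∈ U.powerset.filter Finset.Nonempty,
      (B.card.factorial : ℝ) * m B * G m (U \ B)
      = ∑ B ∈ U.powerset.filter Finset.Nonempty, ∑ P' ∈ parts (U \ B), u B P' := by
    refine Finset.sum_congr rfl (fun B _ => ?_)
    rw [G, Finset.mul_sum]
  rw [step1, ← master]
  have step2 : ∀ P ∈ parts U, ∑ B ∈ P, u B (P.erase B)
      = -(U.card : ℝ) * ((-1 : ℝ) ^ P.card * ∏ B ∈ P, (((B.card - 1).factorial : ℝ) * m B)) := by
    intro P hP
    have hterm : ∀ B ∈ P, u B (P.erase B)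
        = (B.card : ℝ) * (-(-1 : ℝ) ^ P.card * ∏ C ∈ P, (((C.card - 1).factorial : ℝ) * m C)) := by
      intro B hB
      have hBne : B.Nonempty := block_nonempty hP hB
      have hk : B.card - 1 + 1 = B.card := Nat.succ_pred_eq_of_pos (Finset.card_pos.2 hBne)
      have hfact : (B.card.factorial : ℝ) = (B.card : ℝ) * ((B.card - 1).factorial : ℝ) := by
        rw [← hk, Nat.factorial_succ]
        push_cast [hk]
        ring
      have hpow : (-1 : ℝ) ^ (P.erase B).card = -(-1 : ℝ) ^ P.card := by
        have := Finset.card_erase_add_one hB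
        rw [← this, pow_succ]
        ring
      rw [hu]; simp only
      rw [hfact, hpow, ← Finset.mul_prod_erase P (fun C => ((C.card - 1).factorial : ℝ) * m C) hB]
      ring
    rw [Finset.sum_congr rfl hterm, ← Finset.sum_mul]
    have : ∑ B ∈ P, (B.card : ℝ) = (U.card : ℝ) := by
      rw [← Nat.cast_sum]
      exact_mod_cast congrArg (Nat.cast : ℕ → ℝ) (sum_card_parts hP)
    rw [this]
    ring
  rw [Finset.sum_congr rfl step2, ← Finset.mul_sum, ← G]
  ring

/-- products of the values of a log-supermodular `m` over blocks of a partition. -/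
lemma prod_blocks_le (m : Finset ι → ℝ) (hm0 : ∀ B, 0 ≤ m B) (hme : m ∅ = 1)
    (hlsm : ∀ A B, m A * m B ≤ m (A ∩ B) * m (A ∪ B)) :
    ∀ (P : Finset (Finset ι)) (U : Finset ι), P ∈ parts U → ∏ B ∈ P, m B ≤ m U := by
  intro P
  induction P using Finset.cons_induction with
  | empty =>
    intro U hP
    have hU : U = ∅ := by
      by_contra hne
      obtain ⟨i, hi⟩ := Finset.nonempty_iff_ne_empty.2 hne
      obtain ⟨B, ⟨hB, -⟩, -⟩ := (mem_parts.1 hP).2.2 i hi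
      exact absurd hB (Finset.notMem_empty B)
    rw [hU, Finset.prod_empty, hme]
  | cons B P' hBP' ih =>
    intro U hP
    have hB : B ∈ Finset.cons B P' hBP' := Finset.mem_cons_self B P'
    have hsub : B ⊆ U := (mem_parts.1 hP).1 B hB
    have herase : (Finset.cons B P' hBP').erase B = P' := by
      rw [Finset.erase_cons]
    have hP' : P' ∈ parts (U \ B) := herase ▸ erase_mem_parts hP hB
    rw [Finset.prod_cons]
    calc m B * ∏ C ∈ P', m C ≤ m B * m (U \ B) := by
          exact mul_le_mul_of_nonneg_left (ih (U \ B) hP') (hm0 B)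
      _ ≤ m (B ∩ (U \ B)) * m (B ∪ (U \ B)) := hlsm B (U \ B)
      _ = m U := by
          rw [Finset.inter_sdiff_self, Finset.union_sdiff_of_subset hsub, hme, one_mul]

lemma G_nonpos (m : Finset ι → ℝ) (hm0 : ∀ B, 0 ≤ m B) (hme : m ∅ = 1)
    (hanti : ∀ {A B : Finset ι}, A ⊆ B → m B ≤ m A)
    (hlsm : ∀ A B, m A * m B ≤ m (A ∩ B) * m (A ∪ B)) :
    ∀ T : Finset ι, T.Nonempty → G m T ≤ 0 := by
  intro T
  induction T using Finset.strongInduction with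
  | _ T ih =>
  intro hTne
  rcases eq_or_lt_of_le (hm0 T) with hmT | hmT
  · -- m T = 0 : every partition term vanishes
    have : G m T = 0 := by
      rw [G]
      refine Finset.sum_eq_zero (fun P hP => ?_)
      have hprod : ∏ B ∈ P, m B = 0 := by
        have h1 : ∏ B ∈ P, m B ≤ 0 := hmT ▸ prod_blocks_le m hm0 hme hlsm P T hP
        have h2 : 0 ≤ ∏ B ∈ P, m B := Finset.prod_nonneg (fun B _ => hm0 B)
        linarith
      rw [Finset.prod_mul_distrib, hprod]
      ring
    rw [this]
  · -- m T > 0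
    obtain ⟨t, ht⟩ := hTne
    set T' : Finset ι := T.erase t with hT'
    have hT'sub : T' ⊆ T := Finset.erase_subset t T
    have hT'ssub : T' ⊂ T := Finset.erase_ssubset ht
    have hmT' : (0 : ℝ) < m T' := lt_of_lt_of_le hmT (hanti hT'sub)
    -- the key summand bound
    have hGle : ∀ B ∈ T'.powerset.erase T', G m (T' \ B) ≤ 0 := by
      intro B hB
      obtain ⟨hBne, hBsub⟩ := Finset.mem_erase.1 hB
      have hBsub' := Finset.mem_powerset.1 hBsub
      have hssub : T' \ B ⊂ T := lt_of_le_of_lt (Finset.sdiff_subset : T' \ B ⊆ T') hT'ssub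
      have hne : (T' \ B).Nonempty := by
        rw [Finset.sdiff_nonempty]
        intro hsub
        exact hBne (Finset.Subset.antisymm hBsub' hsub)
      exact ih _ hssub hne
    have hinsert : ∀ B ∈ T'.powerset.erase T',
        m T' * ((B.card.factorial : ℝ) * m (insert t B)) ≤ m T * ((B.card.factorial : ℝ) * m B) := by
      intro B hB
      obtain ⟨hBne, hBsub⟩ := Finset.mem_erase.1 hB
      have hBsub' := Finset.mem_powerset.1 hBsub
      have htT' : t ∉ T' := Finset.notMem_erase t T
      have hint : insert t B ∩ T' = B := by
        ext x
        simp only [Finset.mem_inter, Finset.mem_insert]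
        constructor
        · rintro ⟨rfl | hxB, hxT'⟩
          · exact absurd hxT' htT'
          · exact hxB
        · intro hxB; exact ⟨Or.inr hxB, hBsub' hxB⟩
      have huni : insert t B ∪ T' = T := by
        rw [Finset.insert_union, Finset.union_eq_right.2 hBsub', Finset.insert_erase ht]
      have := hlsm (insert t B) T'
      rw [hint, huni] at this
      have hfact : (0 : ℝ) ≤ (B.card.factorial : ℝ) := Nat.cast_nonneg _
      nlinarith [this, hfact]
    -- main chain
    have hI1 := I1 m ht
    rw [← hT'] at hI1
    set s : ℝ := ∑ B ∈ T'.powerset, ((B.card.factorial : ℝ) * m (insert t B)) * G m (T' \ B)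
      with hs
    have hGT : G m T = -s := hI1
    have hT'mem : T' ∈ T'.powerset := Finset.mem_powerset_self T'
    have hsplit : s = ((T'.card.factorial : ℝ) * m (insert t T')) * G m (T' \ T')
        + ∑ B ∈ T'.powerset.erase T', ((B.card.factorial : ℝ) * m (insert t B)) * G m (T' \ B) := by
      rw [hs, ← Finset.add_sum_erase _ _ hT'mem]
    have hTT' : insert t T' = T := Finset.insert_erase ht
    have hsdT' : T' \ T' = ∅ := Finset.sdiff_self T'
    have hmain : m T' * s ≥ m T * ((1 - (T'.card : ℝ)) * G m T') := by
      have hterm : ∀ B ∈ T'.powerset.erase T',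
          m T * (((B.card.factorial : ℝ) * m B) * G m (T' \ B))
            ≤ m T' * (((B.card.factorial : ℝ) * m (insert t B)) * G m (T' \ B)) := by
        intro B hB
        have h1 := hinsert B hB
        have h2 := hGle B hB
        nlinarith [h1, h2]
      have hsum : ∑ B ∈ T'.powerset.erase T', m T * (((B.card.factorial : ℝ) * m B) * G m (T' \ B))
          ≤ ∑ B ∈ T'.powerset.erase T', m T' * (((B.card.factorial : ℝ) * m (insert t B)) * G m (T' \ B)) :=
        Finset.sum_le_sum hterm
      have hI2 := I2 m hme T'
      have hI2' : ∑ B ∈ T'.powerset.erase T', ((B.card.factorial : ℝ) * m B) * G m (T' \ B)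
          = (1 - (T'.card : ℝ)) * G m T' - ((T'.card.factorial : ℝ) * m T') := by
        have h := Finset.add_sum_erase T'.powerset
          (fun B => (B.card.factorial : ℝ) * m B * G m (T' \ B)) hT'mem
        simp only [hsdT', G_empty, mul_one] at h
        rw [hI2] at h
        linarith [h]
      calc m T' * s
          = m T' * (((T'.card.factorial : ℝ) * m (insert t T')) * G m (T' \ T'))
            + ∑ B ∈ T'.powerset.erase T', m T' * (((B.card.factorial : ℝ) * m (insert t B)) * G m (T' \ B)) := by
            rw [hsplit, mul_add, Finset.mul_sum]
        _ ≥ m T' * (((T'.card.factorial : ℝ) * m (insert t T')) * G m (T' \ T'))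
            + ∑ B ∈ T'.powerset.erase T', m T * (((B.card.factorial : ℝ) * m B) * G m (T' \ B)) := by
            linarith [hsum]
        _ = m T' * (((T'.card.factorial : ℝ) * m T)) + m T *
              (∑ B ∈ T'.powerset.erase T', ((B.card.factorial : ℝ) * m B) * G m (T' \ B)) := by
            rw [hTT', hsdT', G_empty, ← Finset.mul_sum]
            ring
        _ = m T * ((1 - (T'.card : ℝ)) * G m T') := by
            rw [hI2']
            ring
    have hfinal : 0 ≤ (1 - (T'.card : ℝ)) * G m T' := by
      rcases Finset.eq_empty_or_nonempty T' with hT'e | hT'ne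
      · rw [hT'e, G_empty]
        simp
      · have hG' : G m T' ≤ 0 := ih T' hT'ssub hT'ne
        have hcard : 1 ≤ T'.card := Finset.card_pos.2 hT'ne
        have : (1 - (T'.card : ℝ)) ≤ 0 := by
          have : (1 : ℝ) ≤ (T'.card : ℝ) := by exact_mod_cast hcard
          linarith
        nlinarith [this, hG']
    have hs0 : 0 ≤ s := by
      have h1 : 0 ≤ m T * ((1 - (T'.card : ℝ)) * G m T') :=
        mul_nonneg (le_of_lt hmT) hfinal
      nlinarith [hmain, h1, hmT']
    rw [hGT]
    linarith

end CIB

namespace CIB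

lemma nu_eq_sum_ite {m : ℕ} (μ : Finset (Fin m) → ℝ) (D : Finset (Fin m)) :
    famMeas μ (upSet D) = ∑ A : Finset (Fin m), (if D ⊆ A then μ A else 0) := by
  rw [famMeas, upSet, Finset.sum_filter]

lemma nu_nonneg {m : ℕ} (μ : Finset (Fin m) → ℝ) (hμ0 : ∀ A, 0 ≤ μ A) (D : Finset (Fin m)) :
    0 ≤ famMeas μ (upSet D) :=
  Finset.sum_nonneg (fun A _ => hμ0 A)

lemma nu_antitone {m : ℕ} (μ : Finset (Fin m) → ℝ) (hμ0 : ∀ A, 0 ≤ μ A)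
    {D D' : Finset (Fin m)} (h : D ⊆ D') : famMeas μ (upSet D') ≤ famMeas μ (upSet D) := by
  refine Finset.sum_le_sum_of_subset_of_nonneg ?_ (fun A _ _ => hμ0 A)
  intro A hA
  rw [upSet, Finset.mem_filter] at hA ⊢
  exact ⟨hA.1, h.trans hA.2⟩

lemma nu_logsupermod {m : ℕ} (μ : Finset (Fin m) → ℝ) (hμ0 : ∀ A, 0 ≤ μ A)
    (hFKG : FKGCondition μ) (S T : Finset (Fin m)) :
    famMeas μ (upSet S) * famMeas μ (upSet T)
      ≤ famMeas μ (upSet (S ∩ T)) * famMeas μ (upSet (S ∪ T)) := by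
  classical
  rw [nu_eq_sum_ite, nu_eq_sum_ite, nu_eq_sum_ite, nu_eq_sum_ite]
  refine four_functions_theorem_univ
    (fun A => if S ⊆ A then μ A else 0) (fun A => if T ⊆ A then μ A else 0)
    (fun A => if S ∩ T ⊆ A then μ A else 0) (fun A => if S ∪ T ⊆ A then μ A else 0)
    (fun A => by dsimp; split <;> simp [hμ0 A])
    (fun A => by dsimp; split <;> simp [hμ0 A])
    (fun A => by dsimp; split <;> simp [hμ0 A])
    (fun A => by dsimp; split <;> simp [hμ0 A])
    (fun a b => ?_)
  by_cases h1 : S ⊆ a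
  · by_cases h2 : T ⊆ b
    · rw [if_pos h1, if_pos h2, if_pos, if_pos]
      · rw [Finset.inf_eq_inter, Finset.sup_eq_union]
        exact hFKG a b
      · rw [Finset.sup_eq_union]
        exact Finset.union_subset_union h1 h2
      · rw [Finset.inf_eq_inter]
        exact Finset.inter_subset_inter h1 h2
    · rw [if_neg h2, mul_zero]
      refine mul_nonneg ?_ ?_ <;> (split <;> simp [hμ0])
  · rw [if_neg h1, zero_mul]
    refine mul_nonneg ?_ ?_ <;> (split <;> simp [hμ0])

end CIB

lemma setPartitions_eq_parts (n : ℕ) :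
    setPartitions n = CIB.parts (Finset.univ : Finset (Fin n)) := by
  ext P
  rw [setPartitions, Finset.mem_filter, CIB.mem_parts, IsSetPartition]
  constructor
  · rintro ⟨-, h2, h3⟩
    exact ⟨fun B _ => B.subset_univ, h2, fun i _ => h3 i⟩
  · rintro ⟨-, h2, h3⟩
    exact ⟨Finset.mem_univ P, h2, fun i => h3 i (Finset.mem_univ i)⟩

set_option maxHeartbeats 1000000 in
theorem correlation_inequality_boolean
    {m n : ℕ} (hn : 1 ≤ n)
    (μ : Finset (Fin m) → ℝ) (hμ : IsProbMeasure μ) (hFKG : FKGCondition μ)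
    (C : Fin n → Finset (Fin m)) :
    0 ≤ ∑ P ∈ setPartitions n,
        (-1 : ℝ) ^ (P.card + 1) *
          (∏ B ∈ P, ((B.card - 1).factorial : ℝ)) *
          ∏ B ∈ P, famMeas μ (upSet (B.sup C)) := by
  classical
  obtain ⟨hμ0, hμ1⟩ := hμ
  set mf : Finset (Fin n) → ℝ := fun B => famMeas μ (upSet (B.sup C)) with hmf
  have hm0 : ∀ B, 0 ≤ mf B := fun B => CIB.nu_nonneg μ hμ0 _
  have hme : mf ∅ = 1 := by
    rw [hmf]
    simp only [Finset.sup_empty]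
    have : upSet (⊥ : Finset (Fin m)) = Finset.univ := by
      rw [upSet]
      refine Finset.filter_true_of_mem (fun S _ => ?_)
      exact Finset.empty_subset S
    rw [this, famMeas, hμ1]
  have hanti : ∀ {A B : Finset (Fin n)}, A ⊆ B → mf B ≤ mf A := by
    intro A B hAB
    exact CIB.nu_antitone μ hμ0 (Finset.sup_mono hAB)
  have hlsm : ∀ A B : Finset (Fin n), mf A * mf B ≤ mf (A ∩ B) * mf (A ∪ B) := by
    intro A B
    have h1 := CIB.nu_logsupermod μ hμ0 hFKG (A.sup C) (B.sup C)
    have h2 : mf (A ∪ B) = famMeas μ (upSet (A.sup C ∪ B.sup C)) := by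
      simp only [hmf, Finset.sup_union, Finset.sup_eq_union]
    have h3 : famMeas μ (upSet (A.sup C ∩ B.sup C)) ≤ mf (A ∩ B) := by
      refine CIB.nu_antitone μ hμ0 ?_
      refine Finset.subset_inter ?_ ?_
      · exact Finset.le_iff_subset.mp (Finset.sup_mono Finset.inter_subset_left)
      · exact Finset.le_iff_subset.mp (Finset.sup_mono Finset.inter_subset_right)
    calc mf A * mf B ≤ famMeas μ (upSet (A.sup C ∩ B.sup C)) * famMeas μ (upSet (A.sup C ∪ B.sup C)) := h1
      _ ≤ mf (A ∩ B) * famMeas μ (upSet (A.sup C ∪ B.sup C)) := by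
          refine mul_le_mul_of_nonneg_right h3 (CIB.nu_nonneg μ hμ0 _)
      _ = mf (A ∩ B) * mf (A ∪ B) := by rw [h2]
  have hne : (Finset.univ : Finset (Fin n)).Nonempty := by
    have : Nonempty (Fin n) := ⟨⟨0, hn⟩⟩
    exact Finset.univ_nonempty
  have hG := CIB.G_nonpos mf hm0 hme hanti hlsm Finset.univ hne
  have hrw : ∑ P ∈ setPartitions n,
      (-1 : ℝ) ^ (P.card + 1) * (∏ B ∈ P, ((B.card - 1).factorial : ℝ)) *
        ∏ B ∈ P, famMeas μ (upSet (B.sup C))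
      = -CIB.G mf Finset.univ := by
    rw [setPartitions_eq_parts, CIB.G, ← Finset.sum_neg_distrib]
    refine Finset.sum_congr rfl (fun P _ => ?_)
    rw [Finset.prod_mul_distrib, pow_succ]
    ring
  rw [hrw]
  linarith

end
end

section
/- Let μ be a probability measure on 2^X satisfying the FKG condition, and let A, B, C ⊆ 2^X be principal upper sets: A = {S : a ⊆ S}, B = {S : b ⊆ S}, C = {S : c ⊆ S} for some a, b, c ⊆ X. Then μ(C) · μ(A ∩ B ∩ C) ≥ μ(A ∩ C) · μ(B ∩ C). (This is a consequence of the four functions theorem of Ahlswede and Daykin.) -/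
open Finset
open scoped Classical

noncomputable section

theorem conditioned_fkg_inequality
    {m : ℕ} (μ : Finset (Fin m) → ℝ) (hμ : IsProbMeasure μ) (hFKG : FKGCondition μ)
    (a b c : Finset (Fin m)) :
    famMeas μ (upSet a ∩ upSet c) * famMeas μ (upSet b ∩ upSet c) ≤
      famMeas μ (upSet c) * famMeas μ (upSet a ∩ upSet b ∩ upSet c) := by
  classical
  set ν : Finset (Fin m) → ℝ := fun S => if c ⊆ S then μ S else 0 with hν
  set f : Finset (Fin m) → ℝ := fun S => if a ⊆ S then 1 else 0 with hf
  set g : Finset (Fin m) → ℝ := fun S => if b ⊆ S then 1 else 0 with hg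
  have hν₀ : 0 ≤ ν := fun S => by dsimp [ν]; split <;> [exact hμ.1 S; exact le_rfl]
  have hf₀ : 0 ≤ f := fun S => by dsimp [f]; positivity
  have hg₀ : 0 ≤ g := fun S => by dsimp [g]; positivity
  have hfmono : Monotone f := by
    intro S T hST
    dsimp [f]
    split_ifs with h1 h2
    · exact le_rfl
    · exact absurd (h1.trans (Finset.le_iff_subset.mp hST)) h2
    · norm_num
    · norm_num
  have hgmono : Monotone g := by
    intro S T hST
    dsimp [g]
    split_ifs with h1 h2
    · exact le_rfl
    · exact absurd (h1.trans (Finset.le_iff_subset.mp hST)) h2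
    · norm_num
    · norm_num
  have hνFKG : ∀ A B, ν A * ν B ≤ ν (A ⊓ B) * ν (A ⊔ B) := by
    intro A B
    dsimp [ν]
    by_cases hA : c ⊆ A
    · by_cases hB : c ⊆ B
      · rw [if_pos hA, if_pos hB, if_pos (by simpa [Finset.subset_inter_iff] using And.intro hA hB),
          if_pos (hA.trans Finset.subset_union_left)]
        exact hFKG A B
      · rw [if_pos hA, if_neg hB, mul_zero]
        exact mul_nonneg (by split <;> [exact hμ.1 _; rfl]) (by split <;> [exact hμ.1 _; rfl])
    · rw [if_neg hA, zero_mul]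
      exact mul_nonneg (by split <;> [exact hμ.1 _; rfl]) (by split <;> [exact hμ.1 _; rfl])
  have key := fkg f g ν hν₀ hf₀ hg₀ hfmono hgmono hνFKG
  have esum : ∀ (p : Finset (Fin m) → Prop) [DecidablePred p],
      famMeas μ (Finset.univ.filter p) = ∑ S : Finset (Fin m), if p S then μ S else 0 := by
    intro p _
    rw [famMeas, Finset.sum_filter]
  have e1 : famMeas μ (upSet a ∩ upSet c) = ∑ S : Finset (Fin m), ν S * f S := by
    rw [upSet, upSet, ← Finset.filter_and, esum]
    refine Finset.sum_congr rfl fun S _ => ?_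
    dsimp [ν, f]
    by_cases h1 : a ⊆ S <;> by_cases h2 : c ⊆ S <;> simp [h1, h2]
  have e2 : famMeas μ (upSet b ∩ upSet c) = ∑ S : Finset (Fin m), ν S * g S := by
    rw [upSet, upSet, ← Finset.filter_and, esum]
    refine Finset.sum_congr rfl fun S _ => ?_
    dsimp [ν, g]
    by_cases h1 : b ⊆ S <;> by_cases h2 : c ⊆ S <;> simp [h1, h2]
  have e3 : famMeas μ (upSet c) = ∑ S : Finset (Fin m), ν S := by
    rw [upSet, esum]
  have e4 : famMeas μ (upSet a ∩ upSet b ∩ upSet c) =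
      ∑ S : Finset (Fin m), ν S * (f S * g S) := by
    rw [upSet, upSet, upSet, ← Finset.filter_and, ← Finset.filter_and, esum]
    refine Finset.sum_congr rfl fun S _ => ?_
    dsimp [ν, f, g]
    by_cases h1 : a ⊆ S <;> by_cases h2 : b ⊆ S <;> by_cases h3 : c ⊆ S <;> simp [h1, h2, h3]
  rw [e1, e2, e3, e4]
  exact key

end
end

section
/- Let μ be a probability measure on 2^X, let C_1,…,C_n ⊆ X, and let A_i = {S ⊆ X : C_i ⊆ S}. Assume μ(A_n) > 0 and let μ_{A_n} be the conditional probability measure on 2^X defined by μ_{A_n}(S) = μ(S)/μ(A_n) if S ∈ A_n and 0 otherwise. Then E^{n−1}_{n,μ}(A_1,…,A_n) = μ(A_n)^n · E_{n,μ_{A_n}}(1_{A_1},…,1_{A_n}). -/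
open Finset
open scoped Classical

noncomputable section

/-- The first `k` indices `{1,…,k}` inside `Fin (n+1)`. -/
def firstK (n k : ℕ) : Finset (Fin (n + 1)) :=
  Finset.univ.filter (fun i => (i : ℕ) < k)

/-- The factor contributed by a block `B` of a partition to `E^k_σ`.  Here the `n+1`
subsets are `A i = upSet (C i)` and `A_n` is `upSet (C (Fin.last n))`; the block
containing the last index is treated differently from the other blocks. -/
def blockTerm {m n : ℕ} (μ : Finset (Fin m) → ℝ) (C : Fin (n + 1) → Finset (Fin m))
    (k : ℕ) (B : Finset (Fin (n + 1))) : ℝ :=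
  if Fin.last n ∈ B then
    famMeas μ (upSet (C (Fin.last n))) ^ (B ∩ firstK n k).card *
      famMeas μ (B.inf fun i => upSet (C i))
  else
    famMeas μ (upSet (C (Fin.last n))) ^ ((B ∩ firstK n k).card - 1) *
      famMeas μ (((B ∩ firstK n k).inf fun i => upSet (C i) ∩ upSet (C (Fin.last n))) ⊓
        ((B \ firstK n k).inf fun i => upSet (C i)))

/-- The quantity `E^k_{n,μ}(A_1,…,A_n)` (with `n+1` sets, indexed by `Fin (n+1)`). -/
def Ek {m n : ℕ} (μ : Finset (Fin m) → ℝ) (C : Fin (n + 1) → Finset (Fin m)) (k : ℕ) : ℝ :=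
  ∑ P ∈ setPartitions (n + 1),
    (-1 : ℝ) ^ (P.card + 1) *
      (∏ B ∈ P, ((B.card - 1).factorial : ℝ)) *
      ∏ B ∈ P, blockTerm μ C k B

/-- Expectation of `f` with respect to `ν`. -/
def expect {m : ℕ} (ν : Finset (Fin m) → ℝ) (f : Finset (Fin m) → ℝ) : ℝ :=
  ∑ A : Finset (Fin m), f A * ν A

/-- The functional `E_{n,ν}(f_1,…,f_n)`. -/
def Efun {m n : ℕ} (ν : Finset (Fin m) → ℝ) (f : Fin n → Finset (Fin m) → ℝ) : ℝ :=
  ∑ P ∈ setPartitions n,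
    (-1 : ℝ) ^ (P.card + 1) *
      (∏ B ∈ P, ((B.card - 1).factorial : ℝ)) *
      ∏ B ∈ P, expect ν (fun A => ∏ i ∈ B, f i A)

lemma mem_finsetInf {β ι : Type*} [DecidableEq β] [Fintype β] (s : Finset ι)
    (f : ι → Finset β) (a : β) : a ∈ s.inf f ↔ ∀ i ∈ s, a ∈ f i := by
  classical
  induction s using Finset.induction_on with
  | empty => simp [Finset.top_eq_univ]
  | insert _ _ h ih => simp [Finset.inf_insert, ih, Finset.inf_eq_inter, Finset.mem_inter]

theorem Ek_top_eq_conditional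
    {m n : ℕ} (μ : Finset (Fin m) → ℝ) (hμ : IsProbMeasure μ)
    (C : Fin (n + 1) → Finset (Fin m))
    (hpos : 0 < famMeas μ (upSet (C (Fin.last n)))) :
    Ek μ C n =
      famMeas μ (upSet (C (Fin.last n))) ^ (n + 1) *
        Efun (fun S => if S ∈ upSet (C (Fin.last n)) then
            μ S / famMeas μ (upSet (C (Fin.last n))) else 0)
          (fun i A => if C i ⊆ A then (1 : ℝ) else 0) := by
  classical
  set α := famMeas μ (upSet (C (Fin.last n))) with hαdef
  have hα0 : α ≠ 0 := ne_of_gt hpos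
  set ν : Finset (Fin m) → ℝ := fun S => if S ∈ upSet (C (Fin.last n)) then μ S / α else 0
    with hνdef
  have hmemup : ∀ (D : Finset (Fin m)) (A : Finset (Fin m)), A ∈ upSet D ↔ D ⊆ A := by
    intro D A; simp [upSet]
  have hexpect : ∀ B : Finset (Fin (n+1)),
      _root_.expect ν (fun A => ∏ i ∈ B, if C i ⊆ A then (1:ℝ) else 0)
        = famMeas μ ((B.inf fun i => upSet (C i)) ⊓ upSet (C (Fin.last n))) / α := by
    intro B
    unfold _root_.expect famMeas
    have hterm : ∀ A : Finset (Fin m),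
        (∏ i ∈ B, if C i ⊆ A then (1:ℝ) else 0) * ν A
          = if A ∈ (B.inf fun i => upSet (C i)) ⊓ upSet (C (Fin.last n))
              then μ A / α else 0 := by
      intro A
      rw [Finset.prod_boole, hνdef]
      simp only [Finset.inf_eq_inter, Finset.mem_inter, mem_finsetInf, hmemup]
      by_cases h1 : ∀ i ∈ B, C i ⊆ A <;> by_cases h2 : C (Fin.last n) ⊆ A <;>
        simp [h1, h2]
    rw [Finset.sum_congr rfl fun A _ => hterm A, Finset.sum_ite_mem, Finset.univ_inter,
      Finset.sum_div]
  unfold Ek Efun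
  rw [Finset.mul_sum]
  refine Finset.sum_congr rfl fun P hP => ?_
  have hPart : IsSetPartition P := (Finset.mem_filter.mp hP).2
  have hne : ∀ B ∈ P, B.Nonempty := by
    intro B hB
    rcases Finset.eq_empty_or_nonempty B with h | h
    · exact absurd (h ▸ hB) hPart.1
    · exact h
  have hfirst : firstK n n = Finset.univ \ {Fin.last n} := by
    ext i
    simp only [firstK, Finset.mem_filter, Finset.mem_univ, true_and, Finset.mem_sdiff,
      Finset.mem_singleton]
    constructor
    · intro h heq; rw [heq] at h; simp [Fin.last] at h
    · intro h
      have := i.isLt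
      rcases Nat.lt_or_ge (i:ℕ) n with h' | h'
      · exact h'
      · exact absurd (Fin.ext (by simp only [Fin.val_last]; omega : (i:ℕ) = (Fin.last n : ℕ))) h
  have hcardsum : ∑ B ∈ P, B.card = n + 1 := by
    have h1 : ∀ i : Fin (n+1), ∑ B ∈ P, (if i ∈ B then 1 else 0) = 1 := by
      intro i
      obtain ⟨B0, hB0, hB0u⟩ := hPart.2 i
      rw [Finset.sum_eq_single B0]
      · simp [hB0.2]
      · intro B hB hneq
        simp only [ite_eq_right_iff]
        intro hi
        exact absurd (hB0u B ⟨hB, hi⟩) hneq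
      · intro h; exact absurd hB0.1 h
    calc ∑ B ∈ P, B.card = ∑ B ∈ P, ∑ i : Fin (n+1), (if i ∈ B then 1 else 0) := by
          refine Finset.sum_congr rfl fun B _ => ?_
          rw [Finset.sum_boole]
          simp [Finset.filter_mem_eq_inter]
      _ = ∑ i : Fin (n+1), ∑ B ∈ P, (if i ∈ B then 1 else 0) := Finset.sum_comm
      _ = n + 1 := by simp [h1]
  have hblock : ∀ B ∈ P, blockTerm μ C n B =
      α ^ B.card * _root_.expect ν (fun A => ∏ i ∈ B, if C i ⊆ A then (1:ℝ) else 0) := by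
    intro B hB
    obtain ⟨c, hc⟩ : ∃ c, B.card = c + 1 := by
      rcases hne B hB with ⟨x, hx⟩
      exact ⟨B.card - 1, (Nat.succ_pred_eq_of_pos (Finset.card_pos.mpr ⟨x, hx⟩)).symm⟩
    rw [hexpect]
    unfold blockTerm
    by_cases hlast : Fin.last n ∈ B
    · rw [if_pos hlast]
      have hinter : B ∩ firstK n n = B.erase (Fin.last n) := by
        rw [hfirst]
        ext i
        simp [Finset.mem_erase, and_comm]
      have hcard : (B ∩ firstK n n).card = c := by
        rw [hinter, Finset.card_erase_of_mem hlast, hc]; omega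
      have hinf : (B.inf fun i => upSet (C i)) ⊓ upSet (C (Fin.last n))
          = B.inf fun i => upSet (C i) :=
        inf_eq_left.mpr (Finset.inf_le hlast)
      rw [hcard, hinf, hc]
      field_simp
      ring
    · rw [if_neg hlast]
      have hinter : B ∩ firstK n n = B := by
        rw [hfirst]
        ext i
        simp only [Finset.mem_inter, Finset.mem_sdiff, Finset.mem_univ, true_and,
          Finset.mem_singleton]
        exact ⟨fun h => h.1, fun h => ⟨h, fun heq => hlast (heq ▸ h)⟩⟩
      have hdiff : B \ firstK n n = ∅ := by
        rw [← hinter]; simp [Finset.sdiff_eq_empty_iff_subset, Finset.inter_subset_right]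
      have hinf : (B.inf fun i => upSet (C i) ∩ upSet (C (Fin.last n)))
          = (B.inf fun i => upSet (C i)) ⊓ upSet (C (Fin.last n)) := by
        ext A
        simp only [mem_finsetInf, Finset.mem_inter, Finset.inf_eq_inter]
        constructor
        · intro h
          rcases hne B hB with ⟨x, hx⟩
          exact ⟨fun i hi => (h i hi).1, (h x hx).2⟩
        · intro h i hi
          exact ⟨h.1 i hi, h.2⟩
      rw [hinter, hdiff, hc, Nat.add_sub_cancel]
      simp only [Finset.inf_empty, inf_top_eq, hinf]
      field_simp
      ring
  rw [Finset.prod_congr rfl hblock, Finset.prod_mul_distrib, Finset.prod_pow_eq_pow_sum,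
    hcardsum]
  ring


end
end

section
/- Let μ be a probability measure on 2^X satisfying the FKG condition, let C_1,…,C_n ⊆ X, and let A_i = {S ⊆ X : C_i ⊆ S}. For 0 ≤ k ≤ n−1 define the correction term I^k_{n,μ}(A_1,…,A_n) = μ(A_n)^k · μ(A_1 ∩ ⋯ ∩ A_n) − E^k_{n,μ}(A_1,…,A_n). Then for every k with 0 ≤ k ≤ n−2, I^{k+1}_{n,μ}(A_1,…,A_n) ≥ μ(A_n) · I^k_{n,μ}(A_1,…,A_n). -/
open Finset
open scoped Classical

noncomputable section

variable {m : ℕ}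

lemma mem_upSet {C S : Finset (Fin m)} : S ∈ upSet C ↔ C ⊆ S := by
  simp [upSet]

lemma famMeas_nonneg {μ : Finset (Fin m) → ℝ} (hμ : ∀ A, 0 ≤ μ A)
    (𝒜 : Finset (Finset (Fin m))) : 0 ≤ famMeas μ 𝒜 :=
  Finset.sum_nonneg fun _ _ => hμ _

lemma famMeas_mono {μ : Finset (Fin m) → ℝ} (hμ : ∀ A, 0 ≤ μ A)
    {𝒜 ℬ : Finset (Finset (Fin m))} (h : 𝒜 ⊆ ℬ) : famMeas μ 𝒜 ≤ famMeas μ ℬ :=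
  Finset.sum_le_sum_of_subset_of_nonneg h fun A _ _ => hμ A

lemma famMeas_univ {μ : Finset (Fin m) → ℝ} (hμ : IsProbMeasure μ) :
    famMeas μ (⊤ : Finset (Finset (Fin m))) = 1 := hμ.2

lemma famMeas_le_one {μ : Finset (Fin m) → ℝ} (hμ : IsProbMeasure μ)
    (𝒜 : Finset (Finset (Fin m))) : famMeas μ 𝒜 ≤ 1 := by
  rw [← famMeas_univ hμ]
  exact famMeas_mono hμ.1 (subset_univ _)

lemma upSet_inter (C D : Finset (Fin m)) : upSet C ∩ upSet D = upSet (C ∪ D) := by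
  ext S; simp [mem_upSet, union_subset_iff]

lemma inf_upSet {ι : Type*} (C : ι → Finset (Fin m)) (B : Finset ι) :
    (B.inf fun i => upSet (C i)) = upSet (B.sup C) := by
  ext S
  simp only [mem_inf, mem_upSet, Finset.sup_le_iff]

/-- Harris/FKG inequality for principal upper sets. -/
lemma harris {μ : Finset (Fin m) → ℝ} (hμ : IsProbMeasure μ) (hFKG : FKGCondition μ)
    (C D : Finset (Fin m)) :
    famMeas μ (upSet C) * famMeas μ (upSet D) ≤ famMeas μ (upSet C ∩ upSet D) := by
  have hf : ∀ S : Finset (Fin m), (0:ℝ) ≤ (if C ⊆ S then (1:ℝ) else 0) := by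
    intro S; positivity
  have hg : ∀ S : Finset (Fin m), (0:ℝ) ≤ (if D ⊆ S then (1:ℝ) else 0) := by
    intro S; positivity
  have hmono : ∀ (E : Finset (Fin m)), Monotone (fun S => if E ⊆ S then (1:ℝ) else 0) := by
    intro E S T hST
    by_cases h : E ⊆ S
    · simp [h, h.trans hST]
    · by_cases h' : E ⊆ T <;> simp [h, h']
  have key := fkg (μ := μ) (f := fun S => if C ⊆ S then (1:ℝ) else 0)
    (g := fun S => if D ⊆ S then (1:ℝ) else 0) hμ.1 hf hg (hmono C) (hmono D)
    (fun A B => by simpa [inf_eq_inter, sup_eq_union] using hFKG A B)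
  have e1 : ∑ S : Finset (Fin m), μ S * (if C ⊆ S then (1:ℝ) else 0) = famMeas μ (upSet C) := by
    rw [famMeas, upSet, Finset.sum_filter]
    exact Finset.sum_congr rfl fun S _ => by by_cases h : C ⊆ S <;> simp [h]
  have e2 : ∑ S : Finset (Fin m), μ S * (if D ⊆ S then (1:ℝ) else 0) = famMeas μ (upSet D) := by
    rw [famMeas, upSet, Finset.sum_filter]
    exact Finset.sum_congr rfl fun S _ => by by_cases h : D ⊆ S <;> simp [h]
  have e3 : ∑ S : Finset (Fin m), μ S *
      ((if C ⊆ S then (1:ℝ) else 0) * (if D ⊆ S then (1:ℝ) else 0)) =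
      famMeas μ (upSet C ∩ upSet D) := by
    have : ∀ S : Finset (Fin m), μ S *
        ((if C ⊆ S then (1:ℝ) else 0) * (if D ⊆ S then (1:ℝ) else 0)) =
        if S ∈ upSet C ∩ upSet D then μ S else 0 := by
      intro S
      by_cases h1 : C ⊆ S <;> by_cases h2 : D ⊆ S <;>
        simp [h1, h2, Finset.mem_inter, mem_upSet]
    rw [Finset.sum_congr rfl fun S _ => this S, Finset.sum_ite_mem,
      Finset.univ_inter, famMeas]
  calc famMeas μ (upSet C) * famMeas μ (upSet D)
      ≤ (∑ S : Finset (Fin m), μ S) * famMeas μ (upSet C ∩ upSet D) := by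
        rw [← e1, ← e2, ← e3]; exact key
    _ = famMeas μ (upSet C ∩ upSet D) := by rw [hμ.2, one_mul]

/-- The conditional measure given the principal upper set of `D`. -/
def condMeas (μ : Finset (Fin m) → ℝ) (D : Finset (Fin m)) (S : Finset (Fin m)) : ℝ :=
  if D ⊆ S then μ S / famMeas μ (upSet D) else 0

lemma condMeas_nonneg {μ : Finset (Fin m) → ℝ} (hμ : ∀ A, 0 ≤ μ A) (D : Finset (Fin m)) :
    ∀ S, 0 ≤ condMeas μ D S := by
  intro S
  unfold condMeas
  split
  · apply div_nonneg (hμ S)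
    exact famMeas_nonneg hμ _
  · exact le_refl _

lemma famMeas_condMeas {μ : Finset (Fin m) → ℝ} (D : Finset (Fin m))
    (𝒜 : Finset (Finset (Fin m))) :
    famMeas (condMeas μ D) 𝒜 = famMeas μ (𝒜 ∩ upSet D) / famMeas μ (upSet D) := by
  rw [famMeas, famMeas, Finset.sum_div]
  rw [← Finset.sum_filter_add_sum_filter_not 𝒜 (fun S => D ⊆ S)]
  have h2 : ∑ S ∈ 𝒜.filter (fun S => ¬ D ⊆ S), condMeas μ D S = 0 := by
    refine Finset.sum_eq_zero fun S hS => ?_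
    have := (Finset.mem_filter.1 hS).2
    simp [condMeas, this]
  rw [h2, add_zero]
  have h3 : 𝒜.filter (fun S => D ⊆ S) = 𝒜 ∩ upSet D := by
    ext S; simp [mem_upSet, Finset.mem_inter, and_comm]
  rw [← h3]
  exact Finset.sum_congr rfl fun S hS => by simp [condMeas, (Finset.mem_filter.1 hS).2]

lemma condMeas_prob {μ : Finset (Fin m) → ℝ} (hμ : IsProbMeasure μ) (D : Finset (Fin m))
    (ha : famMeas μ (upSet D) ≠ 0) : IsProbMeasure (condMeas μ D) := by
  refine ⟨condMeas_nonneg hμ.1 D, ?_⟩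
  have h := famMeas_condMeas (μ := μ) D ⊤
  have htop : (⊤ : Finset (Finset (Fin m))) ∩ upSet D = upSet D := by
    ext S; simp [Finset.mem_inter]
  rw [htop, div_self ha] at h
  simpa [famMeas] using h

lemma condMeas_FKG {μ : Finset (Fin m) → ℝ} (hμ : ∀ A, 0 ≤ μ A) (hFKG : FKGCondition μ)
    (D : Finset (Fin m)) : FKGCondition (condMeas μ D) := by
  intro A B
  have hdnn : ∀ S : Finset (Fin m),
      (0:ℝ) ≤ (if D ⊆ S then μ S / famMeas μ (upSet D) else 0) := by
    intro S; split
    · exact div_nonneg (hμ _) (famMeas_nonneg hμ _)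
    · exact le_refl _
  unfold condMeas
  by_cases hA : D ⊆ A
  · by_cases hB : D ⊆ B
    · rw [if_pos hA, if_pos hB, if_pos (Finset.subset_inter hA hB),
        if_pos (hA.trans Finset.subset_union_left)]
      rw [div_mul_div_comm, div_mul_div_comm]
      rcases eq_or_ne (famMeas μ (upSet D)) 0 with h0 | h0
      · simp [h0]
      · exact div_le_div_of_nonneg_right (hFKG A B)
          (mul_nonneg (famMeas_nonneg hμ _) (famMeas_nonneg hμ _))
    · rw [if_neg hB, mul_zero]
      exact mul_nonneg (hdnn _) (hdnn _)
  · rw [if_neg hA, zero_mul]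
    exact mul_nonneg (hdnn _) (hdnn _)


variable {ι : Type*} [Fintype ι] [DecidableEq ι]

/-- `P` is a partition of the finset `R`. -/
def IsPartitionOf (R : Finset ι) (P : Finset (Finset ι)) : Prop :=
  (∀ B ∈ P, B ≠ ∅) ∧ (∀ B ∈ P, B ⊆ R) ∧ ∀ i ∈ R, ∃! B, B ∈ P ∧ i ∈ B

def partsOf (R : Finset ι) : Finset (Finset (Finset ι)) :=
  Finset.univ.filter (IsPartitionOf R)

lemma mem_partsOf {R : Finset ι} {P : Finset (Finset ι)} :
    P ∈ partsOf R ↔ IsPartitionOf R P := by simp [partsOf]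

namespace IsPartitionOf

variable {R : Finset ι} {P : Finset (Finset ι)}

lemma blocks_disjoint (hP : IsPartitionOf R P) {B B' : Finset ι} (hB : B ∈ P) (hB' : B' ∈ P)
    (hne : B ≠ B') : Disjoint B B' := by
  rw [Finset.disjoint_left]
  intro i hiB hiB'
  have hiR : i ∈ R := hP.2.1 B hB hiB
  obtain ⟨_, _, huniq⟩ := hP.2.2 i hiR
  exact hne ((huniq B ⟨hB, hiB⟩).trans (huniq B' ⟨hB', hiB'⟩).symm)

lemma eq_biUnion (hP : IsPartitionOf R P) : R = P.biUnion id := by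
  ext i
  simp only [Finset.mem_biUnion, id]
  constructor
  · intro hi
    obtain ⟨B, hB, _⟩ := hP.2.2 i hi
    exact ⟨B, hB.1, hB.2⟩
  · rintro ⟨B, hB, hiB⟩
    exact hP.2.1 B hB hiB

lemma sum_card (hP : IsPartitionOf R P) : ∑ B ∈ P, B.card = R.card := by
  have h := Finset.card_biUnion (s := P) (t := id)
    (fun B hB B' hB' hne => hP.blocks_disjoint hB hB' hne)
  rw [hP.eq_biUnion, h]
  simp

/-- The block of a partition containing a given element. -/
lemma exists_block (hP : IsPartitionOf R P) {i : ι} (hi : i ∈ R) :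
    ∃ B ∈ P, i ∈ B := by
  obtain ⟨B, hB, _⟩ := hP.2.2 i hi
  exact ⟨B, hB.1, hB.2⟩

lemma block_unique (hP : IsPartitionOf R P) {i : ι} (hi : i ∈ R) {B B' : Finset ι}
    (hB : B ∈ P) (hiB : i ∈ B) (hB' : B' ∈ P) (hiB' : i ∈ B') : B = B' := by
  obtain ⟨_, _, huniq⟩ := hP.2.2 i hi
  exact (huniq B ⟨hB, hiB⟩).trans (huniq B' ⟨hB', hiB'⟩).symm


lemma erase_block (hP : IsPartitionOf R P) {B : Finset ι} (hB : B ∈ P) :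
    IsPartitionOf (R \ B) (P.erase B) := by
  refine ⟨fun B' h => hP.1 B' (Finset.mem_of_mem_erase h), ?_, ?_⟩
  · intro B' h
    have hB' := Finset.mem_of_mem_erase h
    have hne := Finset.ne_of_mem_erase h
    intro i hi
    rw [Finset.mem_sdiff]
    refine ⟨hP.2.1 B' hB' hi, fun hiB => ?_⟩
    exact hne (hP.block_unique (hP.2.1 B' hB' hi) hB' hi hB hiB)
  · intro i hi
    rw [Finset.mem_sdiff] at hi
    obtain ⟨B', hB', hiB'⟩ := hP.exists_block hi.1
    have hne : B' ≠ B := fun h => hi.2 (h ▸ hiB')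
    refine ⟨B', ⟨Finset.mem_erase.2 ⟨hne, hB'⟩, hiB'⟩, ?_⟩
    rintro B'' ⟨hB'', hiB''⟩
    exact hP.block_unique hi.1 (Finset.mem_of_mem_erase hB'') hiB'' hB' hiB'

end IsPartitionOf

lemma partsOf_singleton (i : ι) : partsOf ({i} : Finset ι) = {{{i}}} := by
  ext P
  simp only [mem_partsOf, Finset.mem_singleton]
  constructor
  · intro hP
    have h1 : ∀ B ∈ P, B = {i} := by
      intro B hB
      have h2 := hP.2.1 B hB
      have h3 := hP.1 B hB
      rw [Finset.subset_singleton_iff] at h2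
      tauto
    obtain ⟨B, hB, hiB⟩ := hP.exists_block (Finset.mem_singleton_self i)
    apply Finset.eq_singleton_iff_unique_mem.2
    exact ⟨(h1 B hB) ▸ hB, fun B' hB' => h1 B' hB'⟩
  · rintro rfl
    refine ⟨?_, ?_, ?_⟩
    · intro B hB; rw [Finset.mem_singleton] at hB; subst hB; simp
    · intro B hB; rw [Finset.mem_singleton] at hB; subst hB; exact Finset.Subset.refl _
    · intro j hj
      refine ⟨{i}, ⟨Finset.mem_singleton_self _, hj⟩, ?_⟩
      rintro B ⟨hB, _⟩
      exact Finset.mem_singleton.1 hB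

/-- Inserting a new block into a partition of the complement. -/
lemma isPartitionOf_insert {R B : Finset ι} (hBR : B ⊆ R) (hBne : B.Nonempty)
    {ρ : Finset (Finset ι)} (hρ : IsPartitionOf (R \ B) ρ) :
    IsPartitionOf R (insert B ρ) := by
  refine ⟨?_, ?_, ?_⟩
  · intro B' hB'
    rcases Finset.mem_insert.1 hB' with rfl | h
    · exact Finset.nonempty_iff_ne_empty.1 hBne
    · exact hρ.1 B' h
  · intro B' hB'
    rcases Finset.mem_insert.1 hB' with rfl | h
    · exact hBR
    · exact (hρ.2.1 B' h).trans (Finset.sdiff_subset)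
  · intro i hi
    by_cases hiB : i ∈ B
    · refine ⟨B, ⟨Finset.mem_insert_self _ _, hiB⟩, ?_⟩
      rintro B' ⟨hB', hiB'⟩
      rcases Finset.mem_insert.1 hB' with rfl | h
      · rfl
      · exact absurd (hρ.2.1 B' h hiB') (by simp [hiB])
    · obtain ⟨B', hB', huniq⟩ := hρ.2.2 i (Finset.mem_sdiff.2 ⟨hi, hiB⟩)
      refine ⟨B', ⟨Finset.mem_insert_of_mem hB'.1, hB'.2⟩, ?_⟩
      rintro B'' ⟨hB'', hiB''⟩
      rcases Finset.mem_insert.1 hB'' with rfl | h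
      · exact absurd hiB'' hiB
      · exact huniq B'' ⟨h, hiB''⟩

/-- Grouping partitions of `R` by the block containing `s`. -/
lemma sum_partsOf_by_block {R : Finset ι} {s : ι} (hs : s ∈ R) (F : Finset (Finset ι) → ℝ) :
    ∑ P ∈ partsOf R, F P =
      ∑ B ∈ R.powerset.filter (fun B => s ∈ B),
        ∑ ρ ∈ partsOf (R \ B), F (insert B ρ) := by
  have himg : ∀ B ∈ R.powerset.filter (fun B => s ∈ B),
      ∑ ρ ∈ partsOf (R \ B), F (insert B ρ) =
      ∑ P ∈ (partsOf (R \ B)).image (insert B), F P := by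
    intro B hB
    rw [Finset.sum_image]
    intro ρ hρ ρ' hρ' h
    have hBρ : B ∉ ρ := by
      intro hmem
      simp only [Finset.mem_filter, Finset.mem_powerset] at hB
      exact absurd ((mem_partsOf.1 hρ).2.1 B hmem hB.2) (by simp [hB.2])
    have hBρ' : B ∉ ρ' := by
      intro hmem
      simp only [Finset.mem_filter, Finset.mem_powerset] at hB
      exact absurd ((mem_partsOf.1 hρ').2.1 B hmem hB.2) (by simp [hB.2])
    have := congrArg (fun P => Finset.erase P B) h
    simpa [Finset.erase_insert, hBρ, hBρ'] using this
  rw [Finset.sum_congr rfl himg]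
  rw [← Finset.sum_biUnion]
  · congr 1
    ext P
    simp only [Finset.mem_biUnion, Finset.mem_filter, Finset.mem_powerset, Finset.mem_image]
    constructor
    · intro hP
      have hP' := mem_partsOf.1 hP
      obtain ⟨B, hB, hsB⟩ := hP'.exists_block hs
      refine ⟨B, ⟨hP'.2.1 B hB, hsB⟩, P.erase B, ?_, ?_⟩
      · rw [mem_partsOf]
        refine ⟨fun B' h => hP'.1 B' (Finset.mem_of_mem_erase h), ?_, ?_⟩
        · intro B' h
          have hB' := Finset.mem_of_mem_erase h
          have hne := Finset.ne_of_mem_erase h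
          intro i hi
          rw [Finset.mem_sdiff]
          refine ⟨hP'.2.1 B' hB' hi, fun hiB => ?_⟩
          exact hne (hP'.block_unique (hP'.2.1 B' hB' hi) hB' hi hB hiB)
        · intro i hi
          rw [Finset.mem_sdiff] at hi
          obtain ⟨B', hB', hiB'⟩ := hP'.exists_block hi.1
          have hne : B' ≠ B := fun h => hi.2 (h ▸ hiB')
          refine ⟨B', ⟨Finset.mem_erase.2 ⟨hne, hB'⟩, hiB'⟩, ?_⟩
          rintro B'' ⟨hB'', hiB''⟩
          exact hP'.block_unique hi.1 (Finset.mem_of_mem_erase hB'') hiB'' hB' hiB'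
      · exact (Finset.insert_erase hB)
    · rintro ⟨B, ⟨hBR, hsB⟩, ρ, hρ, rfl⟩
      exact mem_partsOf.2 (isPartitionOf_insert hBR ⟨s, hsB⟩ (mem_partsOf.1 hρ))
  · intro B hB B' hB' hne
    simp only [Finset.mem_coe, Finset.mem_filter, Finset.mem_powerset] at hB hB'
    rw [Function.onFun, Finset.disjoint_left]
    rintro P hP hP'
    simp only [Finset.mem_image] at hP hP'
    obtain ⟨ρ, hρ, rfl⟩ := hP
    obtain ⟨ρ', hρ', hP'eq⟩ := hP'
    -- insert B ρ = insert B' ρ' means B and B' are both blocks containing s: contradiction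
    have hPart : IsPartitionOf R (insert B ρ) :=
      isPartitionOf_insert hB.1 ⟨s, hB.2⟩ (mem_partsOf.1 hρ)
    have hB'mem : B' ∈ insert B ρ := by
      rw [← hP'eq]; exact Finset.mem_insert_self _ _
    exact hne (hPart.block_unique (hB.1 hB.2) (Finset.mem_insert_self _ _) hB.2 hB'mem hB'.2)



section InsertPt
variable {ι : Type*} [Fintype ι] [DecidableEq ι]

/-- The fiber of partitions of `R` over a partition `ρ` of `R.erase ℓ`. -/
def fibOf (ℓ : ι) (ρ : Finset (Finset ι)) : Finset (Finset (Finset ι)) :=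
  insert (insert {ℓ} ρ) (ρ.image fun B => insert (insert ℓ B) (ρ.erase B))

lemma not_mem_block_of_partsOf_erase {R : Finset ι} {ℓ : ι} {ρ : Finset (Finset ι)}
    (hρ : IsPartitionOf (R.erase ℓ) ρ) {B : Finset ι} (hB : B ∈ ρ) : ℓ ∉ B := by
  intro h
  exact absurd (hρ.2.1 B hB h) (by simp)

lemma remL_eq_left {R : Finset ι} {ℓ : ι} {ρ : Finset (Finset ι)}
    (hρ : IsPartitionOf (R.erase ℓ) ρ) :
    (((insert {ℓ} ρ).image fun B => B.erase ℓ).erase ∅) = ρ := by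
  rw [Finset.image_insert]
  have h1 : (({ℓ} : Finset ι).erase ℓ) = ∅ := by simp
  have h2 : ρ.image (fun B => B.erase ℓ) = ρ := by
    have heq : Set.EqOn (fun B => Finset.erase B ℓ) id (ρ : Set (Finset ι)) := fun B hB =>
      Finset.erase_eq_of_notMem (not_mem_block_of_partsOf_erase hρ (Finset.mem_coe.1 hB))
    rw [Finset.image_congr heq, Finset.image_id]
  rw [h1, h2, Finset.erase_insert]
  intro h
  exact hρ.1 ∅ h rfl

lemma remL_eq_right {R : Finset ι} {ℓ : ι} {ρ : Finset (Finset ι)}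
    (hρ : IsPartitionOf (R.erase ℓ) ρ) {B : Finset ι} (hB : B ∈ ρ) :
    ((((insert (insert ℓ B) (ρ.erase B)).image fun B' => B'.erase ℓ).erase ∅)) = ρ := by
  rw [Finset.image_insert]
  have h1 : (insert ℓ B).erase ℓ = B :=
    Finset.erase_insert (not_mem_block_of_partsOf_erase hρ hB)
  have h2 : (ρ.erase B).image (fun B' => B'.erase ℓ) = ρ.erase B := by
    have heq : Set.EqOn (fun B' => Finset.erase B' ℓ) id ((ρ.erase B : Finset (Finset ι)) :
        Set (Finset ι)) := fun B' hB' => Finset.erase_eq_of_notMem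
      (not_mem_block_of_partsOf_erase hρ (Finset.mem_of_mem_erase (Finset.mem_coe.1 hB')))
    rw [Finset.image_congr heq, Finset.image_id]
  rw [h1, h2, Finset.insert_erase hB]
  apply Finset.erase_eq_of_notMem
  intro h
  exact hρ.1 ∅ h rfl

lemma fib_subset_parts {R : Finset ι} {ℓ : ι} (hℓ : ℓ ∈ R) {ρ : Finset (Finset ι)}
    (hρ : IsPartitionOf (R.erase ℓ) ρ) {P : Finset (Finset ι)} (hP : P ∈ fibOf ℓ ρ) :
    IsPartitionOf R P := by
  have hRℓ : R \ {ℓ} = R.erase ℓ := by simp [Finset.sdiff_singleton_eq_erase]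
  rcases Finset.mem_insert.1 hP with rfl | hP
  · exact isPartitionOf_insert (Finset.singleton_subset_iff.2 hℓ) (Finset.singleton_nonempty ℓ) (hRℓ ▸ hρ)
  · obtain ⟨B, hB, rfl⟩ := Finset.mem_image.1 hP
    have hℓB : ℓ ∉ B := not_mem_block_of_partsOf_erase hρ hB
    have hBK : B ⊆ R.erase ℓ := hρ.2.1 B hB
    have hsub : insert ℓ B ⊆ R := by
      intro i hi
      rcases Finset.mem_insert.1 hi with rfl | hi
      · exact hℓ
      · exact Finset.mem_of_mem_erase (hBK hi)
    have hKB : (R.erase ℓ) \ B = R \ insert ℓ B := by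
      ext i
      simp only [Finset.mem_sdiff, Finset.mem_erase, Finset.mem_insert]
      constructor
      · rintro ⟨⟨hne, hiR⟩, hiB⟩
        exact ⟨hiR, fun h => h.elim hne hiB⟩
      · rintro ⟨hiR, h⟩
        exact ⟨⟨fun he => h (Or.inl he), hiR⟩, fun hi => h (Or.inr hi)⟩
    have herase : IsPartitionOf (R \ insert ℓ B) (ρ.erase B) := hKB ▸ hρ.erase_block hB
    exact isPartitionOf_insert hsub ⟨ℓ, Finset.mem_insert_self _ _⟩ herase

lemma singleton_not_mem_image {R : Finset ι} {ℓ : ι} {ρ : Finset (Finset ι)}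
    (hρ : IsPartitionOf (R.erase ℓ) ρ) :
    insert ({ℓ} : Finset ι) ρ ∉ ρ.image fun B => insert (insert ℓ B) (ρ.erase B) := by
  intro h
  obtain ⟨B, hB, heq⟩ := Finset.mem_image.1 h
  have hℓB : ℓ ∉ B := not_mem_block_of_partsOf_erase hρ hB
  obtain ⟨x, hx⟩ := Finset.nonempty_iff_ne_empty.2 (hρ.1 B hB)
  have h1 : ({ℓ} : Finset ι) ∈ insert (insert ℓ B) (ρ.erase B) := by
    rw [heq]; exact Finset.mem_insert_self _ _
  rcases Finset.mem_insert.1 h1 with h2 | h2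
  · have : x ∈ ({ℓ} : Finset ι) := h2 ▸ Finset.mem_insert_of_mem hx
    rw [Finset.mem_singleton] at this
    exact hℓB (this ▸ hx)
  · exact absurd (Finset.mem_singleton_self ℓ)
      (fun hc => not_mem_block_of_partsOf_erase hρ (Finset.mem_of_mem_erase h2) hc)

lemma image_inj_on {R : Finset ι} {ℓ : ι} {ρ : Finset (Finset ι)}
    (hρ : IsPartitionOf (R.erase ℓ) ρ) {B B' : Finset ι} (hB : B ∈ ρ) (hB' : B' ∈ ρ)
    (heq : insert (insert ℓ B) (ρ.erase B) = insert (insert ℓ B') (ρ.erase B')) : B = B' := by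
  have hℓB : ℓ ∉ B := not_mem_block_of_partsOf_erase hρ hB
  have hℓB' : ℓ ∉ B' := not_mem_block_of_partsOf_erase hρ hB'
  have h1 : insert ℓ B' ∈ insert (insert ℓ B) (ρ.erase B) := by
    rw [heq]; exact Finset.mem_insert_self _ _
  rcases Finset.mem_insert.1 h1 with h2 | h2
  · have := congrArg (fun B => Finset.erase B ℓ) h2
    simpa [Finset.erase_insert hℓB, Finset.erase_insert hℓB'] using this.symm
  · exact absurd (Finset.mem_insert_self ℓ B')
      (not_mem_block_of_partsOf_erase hρ (Finset.mem_of_mem_erase h2))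

lemma remL_facts {R : Finset ι} {ℓ : ι} {ρ : Finset (Finset ι)}
    (hρ : IsPartitionOf (R.erase ℓ) ρ) {P : Finset (Finset ι)} (hP : P ∈ fibOf ℓ ρ) :
    ((P.image fun B => B.erase ℓ).erase ∅) = ρ := by
  rcases Finset.mem_insert.1 hP with rfl | h
  · exact remL_eq_left hρ
  · obtain ⟨B, hB, rfl⟩ := Finset.mem_image.1 h
    exact remL_eq_right hρ hB

/-- Grouping partitions of `R` by the effect of removing the point `ℓ`. -/
lemma sum_partsOf_insert_pt {R : Finset ι} {ℓ : ι} (hℓ : ℓ ∈ R)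
    (F : Finset (Finset ι) → ℝ) :
    ∑ P ∈ partsOf R, F P =
      ∑ ρ ∈ partsOf (R.erase ℓ),
        (F (insert {ℓ} ρ) + ∑ B ∈ ρ, F (insert (insert ℓ B) (ρ.erase B))) := by
  have hcover : partsOf R = (partsOf (R.erase ℓ)).biUnion (fibOf ℓ) := by
    ext P
    simp only [Finset.mem_biUnion]
    constructor
    · intro hP
      have hP' := mem_partsOf.1 hP
      obtain ⟨B₀, hB₀, hℓB₀⟩ := hP'.exists_block hℓ
      by_cases hB₀eq : B₀ = {ℓ}
      · subst hB₀eq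
        refine ⟨P.erase {ℓ}, ?_, ?_⟩
        · rw [mem_partsOf]
          have := hP'.erase_block hB₀
          rwa [Finset.sdiff_singleton_eq_erase] at this
        · rw [fibOf]
          exact Finset.mem_insert.2 (Or.inl (Finset.insert_erase hB₀).symm)
      · set B := B₀.erase ℓ with hBdef
        have hBne : B.Nonempty := by
          by_contra h
          rw [Finset.not_nonempty_iff_eq_empty] at h
          apply hB₀eq
          apply Finset.Subset.antisymm _ (Finset.singleton_subset_iff.2 hℓB₀)
          intro x hx
          rw [Finset.mem_singleton]
          by_contra hxℓ
          have hxB : x ∈ B := Finset.mem_erase.2 ⟨hxℓ, hx⟩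
          rw [h] at hxB
          exact Finset.notMem_empty x hxB
        have hKB : (R.erase ℓ) \ B = R \ B₀ := by
          ext i
          simp only [Finset.mem_sdiff, Finset.mem_erase, hBdef]
          constructor
          · rintro ⟨⟨hne, hiR⟩, hB⟩
            exact ⟨hiR, fun hi => hB ⟨hne, hi⟩⟩
          · rintro ⟨hiR, hB⟩
            exact ⟨⟨fun he => hB (he ▸ hℓB₀), hiR⟩, fun h => hB h.2⟩
        have hBK : B ⊆ R.erase ℓ := by
          intro i hi
          rw [Finset.mem_erase] at hi ⊢
          exact ⟨hi.1, hP'.2.1 B₀ hB₀ hi.2⟩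
        have hρ : IsPartitionOf (R.erase ℓ) (insert B (P.erase B₀)) := by
          apply isPartitionOf_insert hBK hBne
          rw [hKB]
          exact hP'.erase_block hB₀
        refine ⟨insert B (P.erase B₀), mem_partsOf.2 hρ, ?_⟩
        rw [fibOf]
        apply Finset.mem_insert_of_mem
        apply Finset.mem_image.2
        refine ⟨B, Finset.mem_insert_self _ _, ?_⟩
        have hBnotP : B ∉ P.erase B₀ := by
          intro h
          have hBP := Finset.mem_of_mem_erase h
          have hneq := Finset.ne_of_mem_erase h
          have hdisj := hP'.blocks_disjoint hBP hB₀ hneq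
          obtain ⟨x, hx⟩ := hBne
          exact Finset.disjoint_left.1 hdisj hx (Finset.mem_of_mem_erase hx)
        rw [Finset.erase_insert hBnotP]
        rw [hBdef, Finset.insert_erase hℓB₀, Finset.insert_erase hB₀]
    · rintro ⟨ρ, hρ, hP⟩
      exact mem_partsOf.2 (fib_subset_parts hℓ (mem_partsOf.1 hρ) hP)
  rw [hcover, Finset.sum_biUnion]
  · refine Finset.sum_congr rfl fun ρ hρmem => ?_
    have hρ := mem_partsOf.1 hρmem
    rw [fibOf, Finset.sum_insert (singleton_not_mem_image hρ)]
    congr 1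
    rw [Finset.sum_image]
    intro B hB B' hB' h
    exact image_inj_on hρ hB hB' h
  · intro ρ hρ ρ' hρ' hne
    simp only [Finset.mem_coe] at hρ hρ'
    rw [Function.onFun, Finset.disjoint_left]
    intro P hP hP'
    have h1 := remL_facts (mem_partsOf.1 hρ) hP
    have h2 := remL_facts (mem_partsOf.1 hρ') hP'
    exact hne (h1.symm.trans h2)

end InsertPt

section GT
variable {m : ℕ} {ι : Type*} [Fintype ι] [DecidableEq ι]

/-- Generalized block term. -/
def gbt (μ : Finset (Fin m) → ℝ) (C : ι → Finset (Fin m)) (ℓ : ι) (K : Finset ι)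
    (B : Finset ι) : ℝ :=
  if ℓ ∈ B then
    famMeas μ (upSet (C ℓ)) ^ (B ∩ K).card * famMeas μ (B.inf fun i => upSet (C i))
  else
    famMeas μ (upSet (C ℓ)) ^ ((B ∩ K).card - 1) *
      famMeas μ (((B ∩ K).inf fun i => upSet (C i) ∩ upSet (C ℓ)) ⊓
        ((B \ K).inf fun i => upSet (C i)))

/-- Generalized `E`-sum over partitions of `R`. -/
def gT (μ : Finset (Fin m) → ℝ) (C : ι → Finset (Fin m)) (ℓ : ι) (K : Finset ι)
    (R : Finset ι) : ℝ :=
  ∑ P ∈ partsOf R,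
    (-1 : ℝ) ^ (P.card + 1) * (∏ B ∈ P, ((B.card - 1).factorial : ℝ)) *
      ∏ B ∈ P, gbt μ C ℓ K B

/-- The FKG-difference associated to a block. -/
def gδ (μ : Finset (Fin m) → ℝ) (C : ι → Finset (Fin m)) (ℓ : ι) (B : Finset ι) : ℝ :=
  famMeas μ ((B.inf fun i => upSet (C i)) ⊓ upSet (C ℓ)) -
    famMeas μ (upSet (C ℓ)) * famMeas μ (B.inf fun i => upSet (C i))

variable {μ : Finset (Fin m) → ℝ} {C : ι → Finset (Fin m)} {ℓ s : ι} {K B : Finset ι}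

lemma gbt_insert_of_not_mem (hs : s ∉ B) :
    gbt μ C ℓ (insert s K) B = gbt μ C ℓ K B := by
  have h1 : B ∩ insert s K = B ∩ K := by
    ext i; simp only [Finset.mem_inter, Finset.mem_insert]
    constructor
    · rintro ⟨hi, rfl | hk⟩
      · exact absurd hi hs
      · exact ⟨hi, hk⟩
    · rintro ⟨hi, hk⟩; exact ⟨hi, Or.inr hk⟩
  have h2 : B \ insert s K = B \ K := by
    ext i; simp only [Finset.mem_sdiff, Finset.mem_insert]
    constructor
    · rintro ⟨hi, h⟩; exact ⟨hi, fun hk => h (Or.inr hk)⟩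
    · rintro ⟨hi, h⟩
      refine ⟨hi, ?_⟩
      rintro (rfl | hk)
      · exact hs hi
      · exact h hk
  unfold gbt
  rw [h1, h2]

lemma inter_insert_of_mem' (hsB : s ∈ B) (hsK : s ∉ K) :
    B ∩ insert s K = insert s (B ∩ K) ∧ s ∉ B ∩ K := by
  constructor
  · ext i
    simp only [Finset.mem_inter, Finset.mem_insert]
    constructor
    · rintro ⟨hi, rfl | hk⟩
      · exact Or.inl rfl
      · exact Or.inr ⟨hi, hk⟩
    · rintro (rfl | ⟨hi, hk⟩)
      · exact ⟨hsB, Or.inl rfl⟩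
      · exact ⟨hi, Or.inr hk⟩
  · simp [hsK]

lemma gbt_insert_of_mem_block (hsB : s ∈ B) (hsK : s ∉ K) (hℓ : ℓ ∈ B) :
    gbt μ C ℓ (insert s K) B = famMeas μ (upSet (C ℓ)) * gbt μ C ℓ K B := by
  obtain ⟨h1, h2⟩ := inter_insert_of_mem' hsB hsK
  unfold gbt
  rw [if_pos hℓ, if_pos hℓ, h1, Finset.card_insert_of_notMem h2, pow_succ]
  ring

lemma gbt_insert_of_inter_nonempty (hsB : s ∈ B) (hsK : s ∉ K) (hℓ : ℓ ∉ B)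
    (hne : (B ∩ K).Nonempty) :
    gbt μ C ℓ (insert s K) B = famMeas μ (upSet (C ℓ)) * gbt μ C ℓ K B := by
  obtain ⟨h1, h2⟩ := inter_insert_of_mem' hsB hsK
  have hcard : 1 ≤ (B ∩ K).card := Finset.card_pos.2 hne
  have hsBK : s ∈ B \ K := Finset.mem_sdiff.2 ⟨hsB, hsK⟩
  have h3 : B \ insert s K = (B \ K).erase s := by
    ext i
    simp only [Finset.mem_sdiff, Finset.mem_insert, Finset.mem_erase]
    tauto
  -- family equality
  have hfam : ((insert s (B ∩ K)).inf fun i => upSet (C i) ∩ upSet (C ℓ)) ⊓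
      (((B \ K).erase s).inf fun i => upSet (C i)) =
      ((B ∩ K).inf fun i => upSet (C i) ∩ upSet (C ℓ)) ⊓
      ((B \ K).inf fun i => upSet (C i)) := by
    obtain ⟨i₀, hi₀⟩ := hne
    ext S
    simp only [Finset.inf_eq_inter, Finset.mem_inter, mem_inf, Finset.mem_erase, Finset.mem_insert, mem_upSet]
    constructor
    · rintro ⟨hL, hR⟩
      refine ⟨fun i hi => hL i (Or.inr hi), fun i hi => ?_⟩
      by_cases his : i = s
      · rw [his]
        exact (hL s (Or.inl rfl)).1
      · exact hR i ⟨his, hi⟩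
    · rintro ⟨hL, hR⟩
      refine ⟨?_, fun i hi => hR i hi.2⟩
      rintro i (rfl | hi)
      · exact ⟨hR i hsBK, (hL i₀ (Finset.mem_inter.1 hi₀)).2⟩
      · exact hL i hi
  unfold gbt
  rw [if_neg hℓ, if_neg hℓ, h1, h3, hfam, Finset.card_insert_of_notMem h2]
  rw [Nat.add_sub_cancel]
  have : famMeas μ (upSet (C ℓ)) ^ (B ∩ K).card =
      famMeas μ (upSet (C ℓ)) * famMeas μ (upSet (C ℓ)) ^ ((B ∩ K).card - 1) := by
    rw [← pow_succ']
    congr 1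
    omega
  rw [this]
  ring

lemma gbt_of_inter_empty (hsB : s ∈ B) (hℓ : ℓ ∉ B) (hBK : B ∩ K = ∅) :
    gbt μ C ℓ K B = famMeas μ (B.inf fun i => upSet (C i)) := by
  have hBsd : B \ K = B := by
    rw [Finset.sdiff_eq_self_iff_disjoint]
    exact Finset.disjoint_left.2 fun i hiB hiK =>
      (Finset.eq_empty_iff_forall_notMem.1 hBK i) (Finset.mem_inter.2 ⟨hiB, hiK⟩)
  unfold gbt
  rw [if_neg hℓ, hBK, hBsd, Finset.card_empty, Finset.inf_empty, top_inf_eq]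
  norm_num

lemma gbt_insert_of_inter_empty (hsB : s ∈ B) (hsK : s ∉ K) (hℓ : ℓ ∉ B) (hBK : B ∩ K = ∅) :
    gbt μ C ℓ (insert s K) B =
      famMeas μ ((B.inf fun i => upSet (C i)) ⊓ upSet (C ℓ)) := by
  have h1 : B ∩ insert s K = {s} := by
    rw [(inter_insert_of_mem' hsB hsK).1, hBK]
    rfl
  have h3 : B \ insert s K = B.erase s := by
    ext i
    simp only [Finset.mem_sdiff, Finset.mem_insert, Finset.mem_erase]
    constructor
    · rintro ⟨hi, h⟩; exact ⟨fun he => h (Or.inl he), hi⟩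
    · rintro ⟨hne, hi⟩
      refine ⟨hi, ?_⟩
      rintro (rfl | hk)
      · exact hne rfl
      · exact (Finset.eq_empty_iff_forall_notMem.1 hBK i) (Finset.mem_inter.2 ⟨hi, hk⟩)
  have hfam : (({s} : Finset ι).inf fun i => upSet (C i) ∩ upSet (C ℓ)) ⊓
      ((B.erase s).inf fun i => upSet (C i)) =
      (B.inf fun i => upSet (C i)) ⊓ upSet (C ℓ) := by
    ext S
    simp only [Finset.inf_eq_inter, Finset.mem_inter, mem_inf, Finset.mem_erase, Finset.mem_singleton, mem_upSet]
    constructor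
    · rintro ⟨hL, hR⟩
      have hs' := hL s rfl
      refine ⟨fun i hi => ?_, hs'.2⟩
      by_cases his : i = s
      · subst his; exact hs'.1
      · exact hR i ⟨his, hi⟩
    · rintro ⟨hL, hR⟩
      exact ⟨fun i hi => hi ▸ ⟨hL s hsB, hR⟩, fun i hi => hL i hi.2⟩
  unfold gbt
  rw [if_neg hℓ, h1, h3, hfam, Finset.card_singleton]
  norm_num


lemma key_identity (μ : Finset (Fin m) → ℝ) (C : ι → Finset (Fin m)) (ℓ s : ι) (K R : Finset ι)
    (hsR : s ∈ R) (hsK : s ∉ K) :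
    famMeas μ (upSet (C ℓ)) * gT μ C ℓ K R =
      gT μ C ℓ (insert s K) R +
        ∑ B ∈ R.powerset.filter (fun B => s ∈ B ∧ ℓ ∉ B ∧ B ∩ K = ∅),
          ((B.card - 1).factorial : ℝ) * gδ μ C ℓ B * gT μ C ℓ K (R \ B) := by
  set a := famMeas μ (upSet (C ℓ)) with ha
  have e1 : a * gT μ C ℓ K R =
      ∑ B ∈ R.powerset.filter (fun B => s ∈ B), ∑ ρ ∈ partsOf (R \ B),
        a * ((-1 : ℝ) ^ ((insert B ρ).card + 1) *
          (∏ B' ∈ insert B ρ, ((B'.card - 1).factorial : ℝ)) *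
          ∏ B' ∈ insert B ρ, gbt μ C ℓ K B') := by
    rw [gT, Finset.mul_sum]
    rw [sum_partsOf_by_block hsR (fun P => a * ((-1 : ℝ) ^ (P.card + 1) *
      (∏ B' ∈ P, ((B'.card - 1).factorial : ℝ)) * ∏ B' ∈ P, gbt μ C ℓ K B'))]
  have e2 : gT μ C ℓ (insert s K) R =
      ∑ B ∈ R.powerset.filter (fun B => s ∈ B), ∑ ρ ∈ partsOf (R \ B),
        ((-1 : ℝ) ^ ((insert B ρ).card + 1) *
          (∏ B' ∈ insert B ρ, ((B'.card - 1).factorial : ℝ)) *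
          ∏ B' ∈ insert B ρ, gbt μ C ℓ (insert s K) B') := by
    rw [gT]
    rw [sum_partsOf_by_block hsR (fun P => (-1 : ℝ) ^ (P.card + 1) *
      (∏ B' ∈ P, ((B'.card - 1).factorial : ℝ)) * ∏ B' ∈ P, gbt μ C ℓ (insert s K) B')]
  have hmain : a * gT μ C ℓ K R - gT μ C ℓ (insert s K) R =
      ∑ B ∈ R.powerset.filter (fun B => s ∈ B),
        (if ℓ ∉ B ∧ B ∩ K = ∅ then
          ((B.card - 1).factorial : ℝ) * gδ μ C ℓ B * gT μ C ℓ K (R \ B) else 0) := by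
    rw [e1, e2, ← Finset.sum_sub_distrib]
    refine Finset.sum_congr rfl fun B hB => ?_
    rw [← Finset.sum_sub_distrib]
    simp only [Finset.mem_filter, Finset.mem_powerset] at hB
    obtain ⟨hBR, hsB⟩ := hB
    have hinner : ∀ ρ ∈ partsOf (R \ B),
        (a * ((-1 : ℝ) ^ ((insert B ρ).card + 1) *
            (∏ B' ∈ insert B ρ, ((B'.card - 1).factorial : ℝ)) *
            ∏ B' ∈ insert B ρ, gbt μ C ℓ K B') -
          ((-1 : ℝ) ^ ((insert B ρ).card + 1) *
            (∏ B' ∈ insert B ρ, ((B'.card - 1).factorial : ℝ)) *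
            ∏ B' ∈ insert B ρ, gbt μ C ℓ (insert s K) B')) =
        (if ℓ ∉ B ∧ B ∩ K = ∅ then
          ((B.card - 1).factorial : ℝ) * gδ μ C ℓ B *
            ((-1 : ℝ) ^ (ρ.card + 1) *
              (∏ B' ∈ ρ, ((B'.card - 1).factorial : ℝ)) * ∏ B' ∈ ρ, gbt μ C ℓ K B') else 0) := by
      intro ρ hρmem
      have hρ := mem_partsOf.1 hρmem
      have hBρ : B ∉ ρ := by
        intro hmem
        exact absurd (hρ.2.1 B hmem hsB) (by simp [hsB])
      have hcard : (insert B ρ).card = ρ.card + 1 := Finset.card_insert_of_notMem hBρ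
      have hfact : ∏ B' ∈ insert B ρ, ((B'.card - 1).factorial : ℝ) =
          ((B.card - 1).factorial : ℝ) * ∏ B' ∈ ρ, ((B'.card - 1).factorial : ℝ) :=
        Finset.prod_insert hBρ
      have hK : ∏ B' ∈ insert B ρ, gbt μ C ℓ K B' =
          gbt μ C ℓ K B * ∏ B' ∈ ρ, gbt μ C ℓ K B' := Finset.prod_insert hBρ
      have hnotmem : ∀ B' ∈ ρ, s ∉ B' := by
        intro B' hB' hsB'
        exact absurd (hρ.2.1 B' hB' hsB') (by simp [hsB])
      have hK' : ∏ B' ∈ insert B ρ, gbt μ C ℓ (insert s K) B' =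
          gbt μ C ℓ (insert s K) B * ∏ B' ∈ ρ, gbt μ C ℓ K B' := by
        rw [Finset.prod_insert hBρ]
        congr 1
        exact Finset.prod_congr rfl fun B' hB' => gbt_insert_of_not_mem (hnotmem B' hB')
      rw [hcard, hfact, hK, hK']
      have hsign : (-1 : ℝ) ^ (ρ.card + 1 + 1) = -((-1 : ℝ) ^ (ρ.card + 1)) := by
        rw [pow_succ]; ring
      by_cases hl : ℓ ∈ B
      · rw [gbt_insert_of_mem_block hsB hsK hl]
        rw [if_neg (by tauto)]
        ring
      · by_cases hKB : B ∩ K = ∅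
        · rw [gbt_insert_of_inter_empty hsB hsK hl hKB, gbt_of_inter_empty hsB hl hKB,
            if_pos ⟨hl, hKB⟩, hsign, gδ, ← ha]
          ring
        · rw [gbt_insert_of_inter_nonempty hsB hsK hl (Finset.nonempty_iff_ne_empty.2 hKB)]
          rw [if_neg (by tauto)]
          ring
    rw [Finset.sum_congr rfl hinner]
    by_cases hcond : ℓ ∉ B ∧ B ∩ K = ∅
    · rw [if_pos hcond]
      rw [Finset.sum_congr rfl fun ρ _ => if_pos hcond]
      rw [← Finset.mul_sum, gT]
    · rw [if_neg hcond]
      rw [Finset.sum_congr rfl fun ρ _ => if_neg hcond]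
      exact Finset.sum_const_zero
  have hsplit : ∑ B ∈ R.powerset.filter (fun B => s ∈ B),
      (if ℓ ∉ B ∧ B ∩ K = ∅ then
        ((B.card - 1).factorial : ℝ) * gδ μ C ℓ B * gT μ C ℓ K (R \ B) else 0) =
      ∑ B ∈ R.powerset.filter (fun B => s ∈ B ∧ ℓ ∉ B ∧ B ∩ K = ∅),
        ((B.card - 1).factorial : ℝ) * gδ μ C ℓ B * gT μ C ℓ K (R \ B) := by
    rw [Finset.sum_filter]
    rw [Finset.sum_filter]
    refine Finset.sum_congr rfl fun B _ => ?_
    by_cases h1 : s ∈ B <;> by_cases h2 : ℓ ∉ B ∧ B ∩ K = ∅ <;>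
      simp [h1, h2] <;> tauto
  rw [hsplit] at hmain
  linarith


lemma famMeas_inf_upSet {μ : Finset (Fin m) → ℝ} {D : Finset (Fin m)}
    (haz : famMeas μ (upSet D) ≠ 0) (F : Finset (Finset (Fin m))) :
    famMeas μ (F ⊓ upSet D) = famMeas μ (upSet D) * famMeas (condMeas μ D) F := by
  rw [famMeas_condMeas, Finset.inf_eq_inter]
  field_simp

lemma gbt_plain (μ' : Finset (Fin m) → ℝ) (C : ι → Finset (Fin m)) (x : ι) (B : Finset ι) :
    gbt μ' C x ∅ B = famMeas μ' (B.inf fun i => upSet (C i)) := by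
  unfold gbt
  split
  · rw [Finset.inter_empty, Finset.card_empty, pow_zero, one_mul]
  · rw [Finset.inter_empty, Finset.card_empty, Finset.sdiff_empty, Finset.inf_empty,
      top_inf_eq]
    norm_num

lemma gT_plain_indep (μ' : Finset (Fin m) → ℝ) (C : ι → Finset (Fin m)) (x y : ι)
    (K : Finset ι) : gT μ' C x ∅ K = gT μ' C y ∅ K := by
  unfold gT
  refine Finset.sum_congr rfl fun P _ => ?_
  congr 1
  exact Finset.prod_congr rfl fun B _ => by rw [gbt_plain, gbt_plain]

lemma gbt_allmarked {μ : Finset (Fin m) → ℝ} {C : ι → Finset (Fin m)} {ℓ : ι} {R B : Finset ι}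
    (hBR : B ⊆ R) (hBne : B.Nonempty) (haz : famMeas μ (upSet (C ℓ)) ≠ 0) :
    gbt μ C ℓ (R.erase ℓ) B = famMeas μ (upSet (C ℓ)) ^ B.card *
      famMeas (condMeas μ (C ℓ)) ((B.erase ℓ).inf fun i => upSet (C i)) := by
  have hc1 : 1 ≤ B.card := Finset.card_pos.2 hBne
  have hpow : famMeas μ (upSet (C ℓ)) ^ (B.card - 1) * famMeas μ (upSet (C ℓ)) =
      famMeas μ (upSet (C ℓ)) ^ B.card := by
    rw [← pow_succ]
    congr 1
    omega
  by_cases hℓB : ℓ ∈ B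
  · have h1 : B ∩ R.erase ℓ = B.erase ℓ := by
      ext i
      simp only [Finset.mem_inter, Finset.mem_erase]
      exact ⟨fun ⟨h, h'⟩ => ⟨h'.1, h⟩, fun ⟨h, h'⟩ => ⟨h', h, hBR h'⟩⟩
    have hinf : B.inf (fun i => upSet (C i)) =
        ((B.erase ℓ).inf fun i => upSet (C i)) ⊓ upSet (C ℓ) := by
      conv_lhs => rw [← Finset.insert_erase hℓB]
      rw [Finset.inf_insert, inf_comm]
    unfold gbt
    rw [if_pos hℓB, h1, Finset.card_erase_of_mem hℓB, hinf, famMeas_inf_upSet haz,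
      ← mul_assoc, hpow]
  · have h1 : B ∩ R.erase ℓ = B := by
      ext i
      simp only [Finset.mem_inter, Finset.mem_erase]
      exact ⟨fun h => h.1, fun h => ⟨h, fun he => hℓB (he ▸ h), hBR h⟩⟩
    have h2 : B \ R.erase ℓ = ∅ := by
      rw [Finset.sdiff_eq_empty_iff_subset]
      intro i hi
      exact Finset.mem_erase.2 ⟨fun he => hℓB (he ▸ hi), hBR hi⟩
    have hinf2 : (B.inf fun i => upSet (C i) ∩ upSet (C ℓ)) =
        (B.inf fun i => upSet (C i)) ⊓ upSet (C ℓ) := by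
      obtain ⟨i₀, hi₀⟩ := hBne
      ext S
      simp only [Finset.inf_eq_inter, Finset.mem_inter, mem_inf]
      constructor
      · intro h
        exact ⟨fun i hi => (h i hi).1, (h i₀ hi₀).2⟩
      · rintro ⟨h, h'⟩ i hi
        exact ⟨h i hi, h'⟩
    unfold gbt
    rw [if_neg hℓB, h1, h2, Finset.inf_empty, inf_top_eq, hinf2, famMeas_inf_upSet haz,
      ← mul_assoc, hpow, Finset.erase_eq_of_notMem hℓB]

lemma gT_allmarked {μ : Finset (Fin m) → ℝ} {C : ι → Finset (Fin m)} {ℓ : ι} {R : Finset ι}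
    (hℓR : ℓ ∈ R) (haz : famMeas μ (upSet (C ℓ)) ≠ 0) (hμ : IsProbMeasure μ) :
    gT μ C ℓ (R.erase ℓ) R = famMeas μ (upSet (C ℓ)) ^ R.card * ((R.card : ℝ) - 2) *
      gT (condMeas μ (C ℓ)) C ℓ ∅ (R.erase ℓ) := by
  set a := famMeas μ (upSet (C ℓ)) with ha
  set ν := condMeas μ (C ℓ) with hν
  have hνprob : IsProbMeasure ν := condMeas_prob hμ (C ℓ) haz
  have hRc : 1 ≤ R.card := Finset.card_pos.2 ⟨ℓ, hℓR⟩
  -- step 1: rewrite gbt products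
  have step1 : gT μ C ℓ (R.erase ℓ) R = a ^ R.card *
      ∑ P ∈ partsOf R, (-1 : ℝ) ^ (P.card + 1) *
        (∏ B ∈ P, ((B.card - 1).factorial : ℝ)) *
        ∏ B ∈ P, famMeas ν ((B.erase ℓ).inf fun i => upSet (C i)) := by
    rw [gT, Finset.mul_sum]
    refine Finset.sum_congr rfl fun P hPmem => ?_
    have hP := mem_partsOf.1 hPmem
    have hprod : ∏ B ∈ P, gbt μ C ℓ (R.erase ℓ) B =
        a ^ R.card * ∏ B ∈ P, famMeas ν ((B.erase ℓ).inf fun i => upSet (C i)) := by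
      rw [Finset.prod_congr rfl (fun B hB => gbt_allmarked (hP.2.1 B hB)
        (Finset.nonempty_iff_ne_empty.2 (hP.1 B hB)) haz)]
      rw [Finset.prod_mul_distrib, Finset.prod_pow_eq_pow_sum, hP.sum_card]
    rw [hprod]
    ring
  rw [step1]
  -- step 2: regroup by removing ℓ
  rw [sum_partsOf_insert_pt hℓR (fun P => (-1 : ℝ) ^ (P.card + 1) *
    (∏ B ∈ P, ((B.card - 1).factorial : ℝ)) *
    ∏ B ∈ P, famMeas ν ((B.erase ℓ).inf fun i => upSet (C i)))]
  have hfiber : ∀ ρ ∈ partsOf (R.erase ℓ),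
      ((-1 : ℝ) ^ ((insert {ℓ} ρ).card + 1) *
        (∏ B ∈ insert {ℓ} ρ, ((B.card - 1).factorial : ℝ)) *
        ∏ B ∈ insert {ℓ} ρ, famMeas ν ((B.erase ℓ).inf fun i => upSet (C i)) +
      ∑ B ∈ ρ, ((-1 : ℝ) ^ ((insert (insert ℓ B) (ρ.erase B)).card + 1) *
        (∏ B' ∈ insert (insert ℓ B) (ρ.erase B), ((B'.card - 1).factorial : ℝ)) *
        ∏ B' ∈ insert (insert ℓ B) (ρ.erase B),
          famMeas ν ((B'.erase ℓ).inf fun i => upSet (C i)))) =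
      ((R.card : ℝ) - 2) * ((-1 : ℝ) ^ (ρ.card + 1) *
        (∏ B ∈ ρ, ((B.card - 1).factorial : ℝ)) *
        ∏ B ∈ ρ, famMeas ν (B.inf fun i => upSet (C i))) := by
    intro ρ hρmem
    have hρ := mem_partsOf.1 hρmem
    have hℓnot : ∀ B ∈ ρ, ℓ ∉ B := fun B hB => not_mem_block_of_partsOf_erase hρ hB
    have hsing : ({ℓ} : Finset ι) ∉ ρ := fun h => hℓnot _ h (Finset.mem_singleton_self ℓ)
    have herase : ∀ B ∈ ρ, B.erase ℓ = B := fun B hB =>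
      Finset.erase_eq_of_notMem (hℓnot B hB)
    -- first term
    have ht1 : (-1 : ℝ) ^ ((insert {ℓ} ρ).card + 1) *
        (∏ B ∈ insert {ℓ} ρ, ((B.card - 1).factorial : ℝ)) *
        ∏ B ∈ insert {ℓ} ρ, famMeas ν ((B.erase ℓ).inf fun i => upSet (C i)) =
        -((-1 : ℝ) ^ (ρ.card + 1) *
          (∏ B ∈ ρ, ((B.card - 1).factorial : ℝ)) *
          ∏ B ∈ ρ, famMeas ν (B.inf fun i => upSet (C i))) := by
      rw [Finset.card_insert_of_notMem hsing, Finset.prod_insert hsing,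
        Finset.prod_insert hsing]
      have h1 : (({ℓ} : Finset ι).erase ℓ) = ∅ := by simp
      have h2 : famMeas ν ((∅ : Finset ι).inf fun i => upSet (C i)) = 1 := by
        rw [Finset.inf_empty]
        exact famMeas_univ hνprob
      have hprodν : ∏ B ∈ ρ, famMeas ν ((B.erase ℓ).inf fun i => upSet (C i)) =
          ∏ B ∈ ρ, famMeas ν (B.inf fun i => upSet (C i)) :=
        Finset.prod_congr rfl fun B hB => by rw [herase B hB]
      rw [h1, h2, hprodν]
      simp only [Finset.card_singleton]
      rw [pow_succ]
      norm_num
    -- second terms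
    have ht2 : ∀ B ∈ ρ, ((-1 : ℝ) ^ ((insert (insert ℓ B) (ρ.erase B)).card + 1) *
        (∏ B' ∈ insert (insert ℓ B) (ρ.erase B), ((B'.card - 1).factorial : ℝ)) *
        ∏ B' ∈ insert (insert ℓ B) (ρ.erase B),
          famMeas ν ((B'.erase ℓ).inf fun i => upSet (C i))) =
        (B.card : ℝ) * ((-1 : ℝ) ^ (ρ.card + 1) *
          (∏ B' ∈ ρ, ((B'.card - 1).factorial : ℝ)) *
          ∏ B' ∈ ρ, famMeas ν (B'.inf fun i => upSet (C i))) := by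
      intro B hB
      have hℓB : ℓ ∉ B := hℓnot B hB
      have hBne : B.Nonempty := Finset.nonempty_iff_ne_empty.2 (hρ.1 B hB)
      have hBc : 1 ≤ B.card := Finset.card_pos.2 hBne
      have hρc : 1 ≤ ρ.card := Finset.card_pos.2 ⟨B, hB⟩
      have hnotmem : insert ℓ B ∉ ρ.erase B := fun h =>
        hℓnot _ (Finset.mem_of_mem_erase h) (Finset.mem_insert_self _ _)
      have hcard : (insert (insert ℓ B) (ρ.erase B)).card = ρ.card := by
        rw [Finset.card_insert_of_notMem hnotmem, Finset.card_erase_of_mem hB]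
        omega
      have hfact : ((insert ℓ B).card - 1).factorial = B.card * (B.card - 1).factorial := by
        rw [Finset.card_insert_of_notMem hℓB, Nat.add_sub_cancel]
        have : B.card = (B.card - 1) + 1 := by omega
        rw [this, Nat.factorial_succ, Nat.add_sub_cancel]
      have hbe : (insert ℓ B).erase ℓ = B := Finset.erase_insert hℓB
      have hprodν : ∏ B' ∈ ρ.erase B, famMeas ν ((B'.erase ℓ).inf fun i => upSet (C i)) =
          ∏ B' ∈ ρ.erase B, famMeas ν (B'.inf fun i => upSet (C i)) :=
        Finset.prod_congr rfl fun B' hB' => by rw [herase B' (Finset.mem_of_mem_erase hB')]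
      rw [Finset.prod_insert hnotmem, Finset.prod_insert hnotmem, hcard, hfact, hbe]
      rw [hprodν]
      rw [← Finset.mul_prod_erase ρ _ hB,
        ← Finset.mul_prod_erase ρ (fun B' => famMeas ν (B'.inf fun i => upSet (C i))) hB]
      push_cast
      ring
    rw [ht1, Finset.sum_congr rfl ht2, ← Finset.sum_mul]
    have hsum : ∑ B ∈ ρ, (B.card : ℝ) = (R.card : ℝ) - 1 := by
      rw [← Nat.cast_sum]
      rw [hρ.sum_card, Finset.card_erase_of_mem hℓR]
      push_cast [hRc]
      ring
    rw [hsum]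
    ring
  rw [Finset.sum_congr rfl hfiber, ← Finset.mul_sum]
  have hgT : gT ν C ℓ ∅ (R.erase ℓ) = ∑ ρ ∈ partsOf (R.erase ℓ),
      (-1 : ℝ) ^ (ρ.card + 1) * (∏ B ∈ ρ, ((B.card - 1).factorial : ℝ)) *
        ∏ B ∈ ρ, famMeas ν (B.inf fun i => upSet (C i)) := by
    rw [gT]
    refine Finset.sum_congr rfl fun ρ _ => ?_
    congr 1
    exact Finset.prod_congr rfl fun B _ => gbt_plain ν C ℓ B
  rw [hgT]
  ring


lemma gδ_nonneg {μ : Finset (Fin m) → ℝ} {C : ι → Finset (Fin m)} {ℓ : ι} {B : Finset ι}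
    (hμ : IsProbMeasure μ) (hFKG : FKGCondition μ) : 0 ≤ gδ μ C ℓ B := by
  rw [gδ, sub_nonneg, inf_upSet, Finset.inf_eq_inter, Finset.inter_comm]
  exact harris hμ hFKG (C ℓ) (B.sup C)

lemma gbt_nonneg {μ : Finset (Fin m) → ℝ} {C : ι → Finset (Fin m)} {ℓ : ι} {K B : Finset ι}
    (hμ0 : ∀ A, 0 ≤ μ A) : 0 ≤ gbt μ C ℓ K B := by
  unfold gbt
  split <;>
    exact mul_nonneg (pow_nonneg (famMeas_nonneg hμ0 _) _) (famMeas_nonneg hμ0 _)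

lemma gT_zero {μ : Finset (Fin m) → ℝ} {C : ι → Finset (Fin m)} {ℓ : ι} {K R : Finset ι}
    (hμ0 : ∀ A, 0 ≤ μ A) (haz : famMeas μ (upSet (C ℓ)) = 0) (hℓR : ℓ ∈ R) :
    gT μ C ℓ K R = 0 := by
  rw [gT]
  refine Finset.sum_eq_zero fun P hPmem => ?_
  have hP := mem_partsOf.1 hPmem
  obtain ⟨B₀, hB₀, hℓB₀⟩ := hP.exists_block hℓR
  have hsub : B₀.inf (fun i => upSet (C i)) ⊆ upSet (C ℓ) :=
    Finset.le_iff_subset.1 (Finset.inf_le hℓB₀)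
  have hz : famMeas μ (B₀.inf fun i => upSet (C i)) = 0 :=
    le_antisymm (haz ▸ famMeas_mono hμ0 hsub) (famMeas_nonneg hμ0 _)
  have hgbt : gbt μ C ℓ K B₀ = 0 := by
    unfold gbt
    rw [if_pos hℓB₀, hz, mul_zero]
  rw [Finset.prod_eq_zero hB₀ hgbt, mul_zero]

lemma gT_singleton {μ : Finset (Fin m) → ℝ} {C : ι → Finset (Fin m)} {ℓ : ι} {K : Finset ι}
    (x : ι) : gT μ C ℓ K {x} = gbt μ C ℓ K {x} := by
  rw [gT, partsOf_singleton, Finset.sum_singleton, Finset.prod_singleton,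
    Finset.prod_singleton, Finset.card_singleton, Finset.card_singleton]
  norm_num

lemma gT_nonneg : ∀ (N : ℕ) (μ : Finset (Fin m) → ℝ) (C : ι → Finset (Fin m)) (ℓ : ι)
    (K R : Finset ι), IsProbMeasure μ → FKGCondition μ → ℓ ∈ R → K ⊆ R.erase ℓ →
    R.card * (Fintype.card ι + 2) + (R \ K).card ≤ N → 0 ≤ gT μ C ℓ K R := by
  intro N
  induction N with
  | zero =>
    intro μ C ℓ K R _ _ hℓR _ hN
    have h1 : 1 ≤ R.card := Finset.card_pos.2 ⟨ℓ, hℓR⟩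
    have h2 := Nat.mul_le_mul_right (Fintype.card ι + 2) h1
    omega
  | succ N ih =>
    intro μ C ℓ K R hμ hFKG hℓR hKR hN
    have hRuniv : R.card ≤ Fintype.card ι := by
      simpa using Finset.card_le_card (Finset.subset_univ R)
    have hRc : 1 ≤ R.card := Finset.card_pos.2 ⟨ℓ, hℓR⟩
    by_cases haz : famMeas μ (upSet (C ℓ)) = 0
    · rw [gT_zero hμ.1 haz hℓR]
    · by_cases hs : ∃ s ∈ R, s ∉ K ∧ s ≠ ℓ
      · obtain ⟨s, hsR, hsK, hsℓ⟩ := hs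
        have hkey := key_identity μ C ℓ s K R hsR hsK
        have hsRK : s ∈ R \ K := Finset.mem_sdiff.2 ⟨hsR, hsK⟩
        have hRKc : 1 ≤ (R \ K).card := Finset.card_pos.2 ⟨s, hsRK⟩
        have h1 : 0 ≤ gT μ C ℓ (insert s K) R := by
          apply ih μ C ℓ (insert s K) R hμ hFKG hℓR
          · intro i hi
            rcases Finset.mem_insert.1 hi with rfl | hi
            · exact Finset.mem_erase.2 ⟨hsℓ, hsR⟩
            · exact hKR hi
          · have hers : R \ insert s K = (R \ K).erase s := by
              ext i
              simp only [Finset.mem_sdiff, Finset.mem_insert, Finset.mem_erase]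
              tauto
            rw [hers, Finset.card_erase_of_mem hsRK]
            omega
        have hsum : 0 ≤ ∑ B ∈ R.powerset.filter (fun B => s ∈ B ∧ ℓ ∉ B ∧ B ∩ K = ∅),
            ((B.card - 1).factorial : ℝ) * gδ μ C ℓ B * gT μ C ℓ K (R \ B) := by
          refine Finset.sum_nonneg fun B hB => ?_
          simp only [Finset.mem_filter, Finset.mem_powerset] at hB
          obtain ⟨hBR, hsB, hℓB, hBK⟩ := hB
          have hgTnn : 0 ≤ gT μ C ℓ K (R \ B) := by
            apply ih μ C ℓ K (R \ B) hμ hFKG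
            · exact Finset.mem_sdiff.2 ⟨hℓR, hℓB⟩
            · intro i hi
              have hi' := hKR hi
              rw [Finset.mem_erase] at hi'
              refine Finset.mem_erase.2 ⟨hi'.1, Finset.mem_sdiff.2 ⟨hi'.2, fun hiB => ?_⟩⟩
              exact (Finset.eq_empty_iff_forall_notMem.1 hBK i)
                (Finset.mem_inter.2 ⟨hiB, hi⟩)
            · have hsub : R \ B ⊆ R.erase s := by
                intro i hi
                rw [Finset.mem_sdiff] at hi
                exact Finset.mem_erase.2 ⟨fun he => hi.2 (he ▸ hsB), hi.1⟩
              have hcard : (R \ B).card ≤ R.card - 1 := by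
                have := Finset.card_le_card hsub
                rwa [Finset.card_erase_of_mem hsR] at this
              have hcard2 : ((R \ B) \ K).card ≤ Fintype.card ι := by
                simpa using Finset.card_le_card (Finset.subset_univ ((R \ B) \ K))
              have : (R \ B).card * (Fintype.card ι + 2) ≤
                  (R.card - 1) * (Fintype.card ι + 2) :=
                Nat.mul_le_mul_right _ hcard
              have h3 : (R.card - 1) * (Fintype.card ι + 2) + (Fintype.card ι + 2) =
                  R.card * (Fintype.card ι + 2) := by
                rw [Nat.sub_one_mul]
                have hle : (Fintype.card ι + 2) ≤ R.card * (Fintype.card ι + 2) :=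
                  Nat.le_mul_of_pos_left _ hRc
                omega
              omega
          exact mul_nonneg (mul_nonneg (by positivity) (gδ_nonneg hμ hFKG)) hgTnn
        have hapos : 0 < famMeas μ (upSet (C ℓ)) :=
          lt_of_le_of_ne (famMeas_nonneg hμ.1 _) (Ne.symm haz)
        have h4 : famMeas μ (upSet (C ℓ)) * 0 ≤ famMeas μ (upSet (C ℓ)) * gT μ C ℓ K R := by
          rw [mul_zero, hkey]
          exact add_nonneg h1 hsum
        exact le_of_mul_le_mul_left h4 hapos
      · push_neg at hs
        have hK : K = R.erase ℓ := by
          apply Finset.Subset.antisymm hKR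
          intro i hi
          rw [Finset.mem_erase] at hi
          by_contra hiK
          exact hi.1 (hs i hi.2 hiK)
        subst hK
        rcases eq_or_lt_of_le hRc with h1 | h2
        · -- R.card = 1, so R = {ℓ}
          obtain ⟨x, hx⟩ := Finset.card_eq_one.1 h1.symm
          have hxℓ : x = ℓ := by
            rw [hx, Finset.mem_singleton] at hℓR
            exact hℓR.symm
          rw [hx, hxℓ]
          have : ({ℓ} : Finset ι).erase ℓ = ∅ := by simp
          rw [this] at *
          rw [gT_singleton]
          exact gbt_nonneg hμ.1
        · -- 2 ≤ R.card
          rw [gT_allmarked hℓR haz hμ]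
          have hνprob : IsProbMeasure (condMeas μ (C ℓ)) := condMeas_prob hμ (C ℓ) haz
          have hνFKG : FKGCondition (condMeas μ (C ℓ)) := condMeas_FKG hμ.1 hFKG (C ℓ)
          have hKne : (R.erase ℓ).Nonempty := by
            rw [← Finset.card_pos, Finset.card_erase_of_mem hℓR]
            omega
          obtain ⟨ℓ'', hℓ''⟩ := hKne
          have hgTν : 0 ≤ gT (condMeas μ (C ℓ)) C ℓ ∅ (R.erase ℓ) := by
            rw [gT_plain_indep (condMeas μ (C ℓ)) C ℓ ℓ'' (R.erase ℓ)]
            apply ih (condMeas μ (C ℓ)) C ℓ'' ∅ (R.erase ℓ) hνprob hνFKG hℓ''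
              (Finset.empty_subset _)
            have hcard : (R.erase ℓ).card = R.card - 1 := Finset.card_erase_of_mem hℓR
            have hcard2 : ((R.erase ℓ) \ ∅).card ≤ Fintype.card ι := by
              simpa using Finset.card_le_card (Finset.subset_univ _)
            have h4 : (R.card - 1) * (Fintype.card ι + 2) + (Fintype.card ι + 2) =
                R.card * (Fintype.card ι + 2) := by
              rw [Nat.sub_one_mul]
              have hle : (Fintype.card ι + 2) ≤ R.card * (Fintype.card ι + 2) :=
                Nat.le_mul_of_pos_left _ hRc
              omega
            have hmul : (R.erase ℓ).card * (Fintype.card ι + 2) ≤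
                (R.card - 1) * (Fintype.card ι + 2) :=
              Nat.mul_le_mul_right _ (le_of_eq hcard)
            have h6 : ((R.erase ℓ) \ ∅).card = (R.erase ℓ).card := by
              rw [Finset.sdiff_empty]
            omega
          refine mul_nonneg (mul_nonneg (pow_nonneg (famMeas_nonneg hμ.1 _) _) ?_) hgTν
          have : (2 : ℝ) ≤ (R.card : ℝ) := by exact_mod_cast h2
          linarith

end GT


/-- The correction term `I^k_{n,μ}(A_1,…,A_n)`. -/
def Ik {m n : ℕ} (μ : Finset (Fin m) → ℝ) (C : Fin (n + 1) → Finset (Fin m)) (k : ℕ) : ℝ :=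
  famMeas μ (upSet (C (Fin.last n))) ^ k *
      famMeas μ ((Finset.univ : Finset (Fin (n + 1))).inf fun i => upSet (C i)) -
    Ek μ C k

lemma setPartitions_eq (n : ℕ) :
    setPartitions n = partsOf (Finset.univ : Finset (Fin n)) := by
  ext P
  simp only [setPartitions, partsOf, Finset.mem_filter, Finset.mem_univ, true_and]
  constructor
  · rintro ⟨h1, h2⟩
    exact ⟨fun B hB hBe => h1 (hBe ▸ hB), fun B _ => Finset.subset_univ B,
      fun i _ => h2 i⟩
  · rintro ⟨h1, _, h3⟩
    exact ⟨fun h => h1 ∅ h rfl, fun i => h3 i (Finset.mem_univ i)⟩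

lemma blockTerm_eq_gbt {m n : ℕ} (μ : Finset (Fin m) → ℝ) (C : Fin (n + 1) → Finset (Fin m))
    (k : ℕ) (B : Finset (Fin (n + 1))) :
    blockTerm μ C k B = gbt μ C (Fin.last n) (firstK n k) B := rfl

lemma Ek_eq_gT {m n : ℕ} (μ : Finset (Fin m) → ℝ) (C : Fin (n + 1) → Finset (Fin m))
    (k : ℕ) : Ek μ C k = gT μ C (Fin.last n) (firstK n k) Finset.univ := by
  rw [Ek, gT, setPartitions_eq]
  rfl

theorem Ik_step
    {m n : ℕ} (μ : Finset (Fin m) → ℝ) (hμ : IsProbMeasure μ) (hFKG : FKGCondition μ)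
    (C : Fin (n + 1) → Finset (Fin m)) (k : ℕ) (hk : k + 1 ≤ n) :
    famMeas μ (upSet (C (Fin.last n))) * Ik μ C k ≤ Ik μ C (k + 1) := by
  have hkn : k < n + 1 := by omega
  set s : Fin (n + 1) := ⟨k, hkn⟩ with hs
  set ℓ : Fin (n + 1) := Fin.last n with hℓ
  have hsK : s ∉ firstK n k := by
    simp [firstK, hs]
  have hfirstK : firstK n (k + 1) = insert s (firstK n k) := by
    ext i
    simp only [firstK, Finset.mem_filter, Finset.mem_univ, true_and, Finset.mem_insert,
      hs, Fin.ext_iff]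
    omega
  have hkey := key_identity μ C ℓ s (firstK n k) Finset.univ (Finset.mem_univ s) hsK
  rw [← hfirstK, ← Ek_eq_gT, ← Ek_eq_gT] at hkey
  have hsum : 0 ≤ ∑ B ∈ Finset.univ.powerset.filter
      (fun B => s ∈ B ∧ ℓ ∉ B ∧ B ∩ firstK n k = ∅),
      ((B.card - 1).factorial : ℝ) * gδ μ C ℓ B * gT μ C ℓ (firstK n k)
        (Finset.univ \ B) := by
    refine Finset.sum_nonneg fun B hB => ?_
    simp only [Finset.mem_filter, Finset.mem_powerset] at hB
    obtain ⟨_, hsB, hℓB, hBK⟩ := hB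
    have hgTnn : 0 ≤ gT μ C ℓ (firstK n k) (Finset.univ \ B) := by
      apply gT_nonneg ((Finset.univ \ B).card * (Fintype.card (Fin (n + 1)) + 2) +
        ((Finset.univ \ B) \ firstK n k).card) μ C ℓ (firstK n k) (Finset.univ \ B)
        hμ hFKG
      · exact Finset.mem_sdiff.2 ⟨Finset.mem_univ ℓ, hℓB⟩
      · intro i hi
        have hine : i ≠ ℓ := by
          simp only [firstK, Finset.mem_filter] at hi
          rw [hℓ]
          intro he
          rw [he] at hi
          simp only [Fin.val_last] at hi
          omega
        refine Finset.mem_erase.2 ⟨hine, Finset.mem_sdiff.2 ⟨Finset.mem_univ i, fun hiB => ?_⟩⟩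
        exact (Finset.eq_empty_iff_forall_notMem.1 hBK i) (Finset.mem_inter.2 ⟨hiB, hi⟩)
      · exact le_refl _
    exact mul_nonneg (mul_nonneg (by positivity) (gδ_nonneg hμ hFKG)) hgTnn
  rw [Ik, Ik]
  have hpow : famMeas μ (upSet (C ℓ)) ^ (k + 1) =
      famMeas μ (upSet (C ℓ)) * famMeas μ (upSet (C ℓ)) ^ k := by
    rw [pow_succ]
    ring
  rw [hpow]
  nlinarith [hkey, hsum]

end
end
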